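/- arXiv:2002.12892 — 7 statements merged into one kernel-verified Lean document; each statement's English description precedes it below -/
import Mathlib

section
/- Let q = p^e be a prime power, let 0 ≤ l ≤ e−1, let n ≤ q and k ≤ n. Let a_1,…,a_n be distinct elements of F_q and v_1,…,v_n nonzero elements of F_q, and set u_i = Π_{1≤j≤n, j≠i} (a_i − a_j)^{−1}. A codeword c = (v_1 f(a_1), v_2 f(a_2), …, v_n f(a_n)) of GRS_k(a,v) (with f ∈ F_q[x], deg f ≤ k−1) lies in the l-Galois dual code GRS_k(a,v)^{⊥_l} if and only if there exists a polynomial g(x) ∈ F_q[x] with deg g ≤ n−k−1 such that (v_1^{p^l+1} f(a_1)^{p^l}, v_2^{p^l+1} f(a_2)^{p^l}, …, v_n^{p^l+1} f(a_n)^{p^l}) = (u_1 g(a_1), u_2 g(a_2), …, u_n g(a_n)). -/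
open Finset Polynomial

/-- The `l`-Galois dual of a linear code `C ⊆ F^n` over a field `F` of characteristic `p`:
the set of `x` with `∑ i, y i * (x i)^(p^l) = 0` for all codewords `y ∈ C`. -/
def galoisDual (p l : ℕ) [Fact p.Prime] {F : Type*} [Field F] [CharP F p] {n : ℕ}
    (C : Submodule F (Fin n → F)) : Submodule F (Fin n → F) where
  carrier := {x | ∀ y ∈ C, ∑ i, y i * x i ^ p ^ l = 0}
  zero_mem' := by
    intro y _
    have hp : p ^ l ≠ 0 := pow_ne_zero _ (Fact.out (p := p.Prime)).ne_zero
    simp [zero_pow hp]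
  add_mem' := by
    intro a b ha hb y hy
    have h : ∀ i : Fin _, (a + b) i ^ p ^ l = a i ^ p ^ l + b i ^ p ^ l := by
      intro i
      simpa using add_pow_char_pow (a i) (b i) (p := p) (n := l)
    calc ∑ i, y i * (a + b) i ^ p ^ l
        = (∑ i, y i * a i ^ p ^ l) + ∑ i, y i * b i ^ p ^ l := by
          rw [← Finset.sum_add_distrib]; exact Finset.sum_congr rfl fun i _ => by
            rw [h i, mul_add]
      _ = 0 := by rw [ha y hy, hb y hy, add_zero]
  smul_mem' := by
    intro c x hx y hy
    have h : ∀ i : Fin _, (c • x) i ^ p ^ l = c ^ p ^ l * x i ^ p ^ l := by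
      intro i; simp [mul_pow]
    calc ∑ i, y i * (c • x) i ^ p ^ l
        = c ^ p ^ l * ∑ i, y i * x i ^ p ^ l := by
          rw [Finset.mul_sum]; exact Finset.sum_congr rfl fun i _ => by rw [h i]; ring
      _ = 0 := by rw [hx y hy, mul_zero]

/-- The evaluation map `f ↦ (v₁ f(a₁), …, vₙ f(aₙ))`. -/
noncomputable def grsEval (F : Type*) [Field F] (n : ℕ) (a v : Fin n → F) :
    Polynomial F →ₗ[F] (Fin n → F) where
  toFun f := fun i => v i * f.eval (a i)
  map_add' f g := by funext i; simp [mul_add]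
  map_smul' c f := by funext i; simp [smul_eq_mul]; ring

/-- The generalized Reed–Solomon code `GRS_k(a, v)`: the image of the polynomials of
degree at most `k - 1` under the evaluation map. -/
noncomputable def GRSCode (F : Type*) [Field F] (n k : ℕ) (a v : Fin n → F) :
    Submodule F (Fin n → F) :=
  (Polynomial.degreeLT F k).map (grsEval F n a v)


/-!
Write `uᵢ` for the nodal weights and `wᵢ = vᵢ^{pˡ+1} f(aᵢ)^{pˡ}`. Since
`(vᵢ h(aᵢ)) (vᵢ f(aᵢ))^{pˡ} = h(aᵢ) wᵢ`, the codeword lies in the `l`-Galois dual iff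
`∑ᵢ h(aᵢ) wᵢ = 0` whenever `deg h < k`. Lagrange interpolation gives `∑ᵢ uᵢ R(aᵢ) = [x^{n-1}] R`
for every `R` of degree `< n`. If `wᵢ = uᵢ g(aᵢ)` with `deg g < n - k`, the sum is thus the
`x^{n-1}`-coefficient of `hg`, which vanishes. Conversely, let `g` interpolate `wᵢ / uᵢ`; if
`d = deg g ≥ n - k`, then `h = x^{n-1-d}` has degree `< k` and the sum equals the leading
coefficient of `g`, a contradiction.
-/

namespace Lagrange

variable {F ι : Type*} [Field F] [DecidableEq ι] {v : ι → F}

theorem coeff_eq_sum_nodalWeight_mul_eval {s : Finset ι} (hvs : Set.InjOn v s) {P : F[X]}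
    (hP : P.degree < #s) :
    P.coeff (#s - 1) = ∑ i ∈ s, nodalWeight s v i * P.eval (v i) := by
  rw [coeff_eq_sum hvs hP]
  refine sum_congr rfl fun i _ => ?_
  rw [nodalWeight, prod_inv_distrib, div_eq_mul_inv, mul_comm]

variable [Fintype ι]

theorem exists_nodalWeight_mul_eval_of_sum_eval_mul_eq_zero (hv : Function.Injective v)
    {w : ι → F} {k : ℕ} (hw : ∀ h ∈ degreeLT F k, ∑ i, h.eval (v i) * w i = 0) :
    ∃ g ∈ degreeLT F (Fintype.card ι - k), ∀ i, w i = nodalWeight univ v i * g.eval (v i) := by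
  have hvs : Set.InjOn v (univ : Finset ι) := hv.injOn
  set g := interpolate univ v fun i => (nodalWeight univ v i)⁻¹ * w i
  have hg : ∀ i, nodalWeight univ v i * g.eval (v i) = w i := fun i => by
    rw [eval_interpolate_at_node _ hvs (mem_univ i),
      mul_inv_cancel_left₀ (nodalWeight_ne_zero hvs (mem_univ i))]
  refine ⟨g, ?_, fun i => (hg i).symm⟩
  rcases eq_or_ne g 0 with hg0 | hg0
  · rw [hg0]; exact zero_mem _
  have hg_lt : g.natDegree < Fintype.card ι := by
    rw [natDegree_lt_iff_degree_lt hg0, ← card_univ]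
    exact degree_interpolate_lt _ hvs
  rw [mem_degreeLT, degree_eq_natDegree hg0, Nat.cast_lt]
  by_contra! hge
  set m := Fintype.card ι - 1 - g.natDegree
  have hXm : (X ^ m : F[X]) ∈ degreeLT F k := by
    rw [mem_degreeLT, degree_X_pow, Nat.cast_lt]
    omega
  have hdeg : (X ^ m * g).degree < (#(univ : Finset ι) : WithBot ℕ) := by
    rw [degree_mul, degree_X_pow, degree_eq_natDegree hg0, card_univ]
    exact_mod_cast (by omega : m + g.natDegree < Fintype.card ι)
  have hcoeff : (X ^ m * g).coeff (#(univ : Finset ι) - 1) = g.leadingCoeff := by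
    rw [card_univ, show Fintype.card ι - 1 = g.natDegree + m by omega, coeff_X_pow_mul]
    rfl
  refine leadingCoeff_ne_zero.mpr hg0 ?_
  rw [← hcoeff, coeff_eq_sum_nodalWeight_mul_eval hvs hdeg, ← hw _ hXm]
  refine sum_congr rfl fun i _ => ?_
  rw [eval_mul, ← hg i]
  ring

theorem sum_eval_mul_eq_zero_of_eq_nodalWeight_mul_eval (hv : Function.Injective v)
    {w : ι → F} {k : ℕ} {g : F[X]} (hg : g ∈ degreeLT F (Fintype.card ι - k))
    (hw : ∀ i, w i = nodalWeight univ v i * g.eval (v i)) {h : F[X]} (hh : h ∈ degreeLT F k) :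
    ∑ i, h.eval (v i) * w i = 0 := by
  have hhg : (h * g).degree < ↑(Fintype.card ι - 1) := by
    rcases eq_or_ne h 0 with rfl | hh0
    · simp
    rcases eq_or_ne g 0 with rfl | hg0
    · simp
    rw [mem_degreeLT, degree_eq_natDegree hh0, Nat.cast_lt] at hh
    rw [mem_degreeLT, degree_eq_natDegree hg0, Nat.cast_lt] at hg
    rw [degree_mul, degree_eq_natDegree hh0, degree_eq_natDegree hg0]
    exact_mod_cast (by omega : h.natDegree + g.natDegree < Fintype.card ι - 1)
  have hhg_lt_card : (h * g).degree < (#(univ : Finset ι) : WithBot ℕ) :=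
    hhg.trans_le (by rw [card_univ]; exact_mod_cast Nat.sub_le _ _)
  calc ∑ i, h.eval (v i) * w i = ∑ i, nodalWeight univ v i * (h * g).eval (v i) :=
        sum_congr rfl fun i _ => by rw [hw i, eval_mul]; ring
    _ = (h * g).coeff (Fintype.card ι - 1) := by
        rw [← card_univ, coeff_eq_sum_nodalWeight_mul_eval hv.injOn hhg_lt_card]
    _ = 0 := coeff_eq_zero_of_degree_lt hhg

theorem sum_eval_mul_eq_zero_iff (hv : Function.Injective v) (w : ι → F) (k : ℕ) :
    (∀ h ∈ degreeLT F k, ∑ i, h.eval (v i) * w i = 0) ↔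
      ∃ g ∈ degreeLT F (Fintype.card ι - k), ∀ i, w i = nodalWeight univ v i * g.eval (v i) :=
  ⟨exists_nodalWeight_mul_eval_of_sum_eval_mul_eq_zero hv, fun ⟨_, hg, hw⟩ _ hh =>
    sum_eval_mul_eq_zero_of_eq_nodalWeight_mul_eval hv hg hw hh⟩

end Lagrange

theorem mem_galoisDual_GRSCode_iff {p l : ℕ} [Fact p.Prime] {F : Type*} [Field F] [CharP F p]
    {n k : ℕ} {a v x : Fin n → F} :
    x ∈ galoisDual p l (GRSCode F n k a v) ↔
      ∀ h ∈ degreeLT F k, ∑ i, v i * h.eval (a i) * x i ^ p ^ l = 0 := by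
  show (∀ y ∈ (degreeLT F k).map (grsEval F n a v), _) ↔ _
  simp only [Submodule.mem_map, forall_exists_index, and_imp, forall_apply_eq_imp_iff₂]
  rfl

theorem grs_mem_galoisDual_iff_general (p e l n k : ℕ) [Fact p.Prime]
    (a v : Fin n → GaloisField p e) (ha : Function.Injective a)
    (f : Polynomial (GaloisField p e)) :
    (fun i => v i * f.eval (a i)) ∈ galoisDual p l (GRSCode (GaloisField p e) n k a v) ↔
      ∃ g ∈ Polynomial.degreeLT (GaloisField p e) (n - k),
        ∀ i, v i ^ (p ^ l + 1) * f.eval (a i) ^ p ^ l =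
          (∏ j ∈ Finset.univ.erase i, (a i - a j)⁻¹) * g.eval (a i) := by
  have hsum : ∀ h : Polynomial (GaloisField p e),
      ∑ i, v i * h.eval (a i) * (v i * f.eval (a i)) ^ p ^ l =
        ∑ i, h.eval (a i) * (v i ^ (p ^ l + 1) * f.eval (a i) ^ p ^ l) :=
    fun h => sum_congr rfl fun i _ => by ring
  simp only [mem_galoisDual_GRSCode_iff, hsum]
  have key := Lagrange.sum_eval_mul_eq_zero_iff ha
    (fun i => v i ^ (p ^ l + 1) * f.eval (a i) ^ p ^ l) k
  rwa [Fintype.card_fin] at key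

/-- Lemma 2: a codeword `(v₁ f(a₁), …, vₙ f(aₙ))` of `GRS_k(a, v)` lies in
the `l`-Galois dual `GRS_k(a, v)^{⊥_l}` iff there is a polynomial `g` with `deg g ≤ n - k - 1`
such that `vᵢ^{pˡ+1} f(aᵢ)^{pˡ} = uᵢ g(aᵢ)` for all `i`, where
`uᵢ = ∏_{j ≠ i} (aᵢ - aⱼ)⁻¹`. -/
theorem grs_mem_galoisDual_iff (p e l n k : ℕ) [Fact p.Prime] (he : 0 < e)
    (hl : l ≤ e - 1) (hn : n ≤ p ^ e) (hkn : k ≤ n)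
    (a v : Fin n → GaloisField p e) (ha : Function.Injective a) (hv : ∀ i, v i ≠ 0)
    (f : Polynomial (GaloisField p e)) (hf : f ∈ Polynomial.degreeLT (GaloisField p e) k) :
    (fun i => v i * f.eval (a i)) ∈ galoisDual p l (GRSCode (GaloisField p e) n k a v) ↔
      ∃ g ∈ Polynomial.degreeLT (GaloisField p e) (n - k),
        ∀ i, v i ^ (p ^ l + 1) * f.eval (a i) ^ p ^ l =
          (∏ j ∈ Finset.univ.erase i, (a i - a j)⁻¹) * g.eval (a i) :=
  grs_mem_galoisDual_iff_general p e l n k a v ha f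
end

section
/- Let q = p^e with p an odd prime and let 0 ≤ l ≤ e−1 with l dividing e (so that F_{p^l} is a subfield of F_q). Then the following are equivalent: (i) for every u ∈ F_{p^l}^*, there exists v ∈ F_q^* such that v^{p^l+1} = u; (ii) 2l divides e. -/
/-!
Write `k = p ^ l` and `e = l * m`. The group `F_q^*` is cyclic of order `N = k ^ m - 1`, and
`F_k^*` is its `(k - 1)`-torsion. If `m` is even then `k ^ 2 - 1 ∣ N`, and for a generator `g`,
`(g ^ j) ^ (k - 1) = 1` forces `k + 1 ∣ j`. Conversely, since `k + 1` is even every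
`(k + 1)`-th power is an even power of `g`, while `g ^ (N / (k - 1))` lies in `F_k^*` and
`N / (k - 1) = 1 + k + ⋯ + k ^ (m - 1)` is odd when `m` is odd.
-/

namespace IsCyclic

variable {G : Type*} [Group G] [Finite G] [IsCyclic G] {a b : ℕ}

theorem exists_pow_eq_of_pow_eq_one (hab : a * b ∣ Nat.card G) {x : G} (hx : x ^ a = 1) :
    ∃ y : G, y ^ b = x := by
  obtain ⟨g, hg⟩ := exists_monoid_generator (α := G)
  obtain ⟨j, rfl⟩ := (Submonoid.mem_powers_iff x g).mp (hg x)
  have ha : 0 < a := Nat.pos_of_dvd_of_pos (dvd_of_mul_right_dvd hab) Nat.card_pos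
  have hja : a * b ∣ a * j := by
    rw [← pow_mul, ← orderOf_dvd_iff_pow_eq_one, orderOf_eq_card_of_forall_mem_powers hg] at hx
    exact hab.trans (mul_comm j a ▸ hx)
  obtain ⟨i, rfl⟩ := Nat.dvd_of_mul_dvd_mul_left ha hja
  exact ⟨g ^ i, by rw [← pow_mul, mul_comm]⟩

theorem two_mul_dvd_card_of_forall_pow_eq_one_exists_pow_eq (hG : Even (Nat.card G))
    (ha : a ∣ Nat.card G) (hb : Even b) (h : ∀ x : G, x ^ a = 1 → ∃ y : G, y ^ b = x) :
    2 * a ∣ Nat.card G := by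
  obtain ⟨g, hg⟩ := exists_monoid_generator (α := G)
  obtain ⟨c, hc⟩ := ha
  obtain ⟨y, hy⟩ := h (g ^ c) (by rw [← pow_mul, mul_comm, ← hc, pow_card_eq_one'])
  obtain ⟨j, rfl⟩ := (Submonoid.mem_powers_iff y g).mp (hg y)
  have hmod : j * b ≡ c [MOD Nat.card G] := by
    rw [← orderOf_eq_card_of_forall_mem_powers hg, ← pow_eq_pow_iff_modEq, pow_mul, hy]
  have hc2 : 2 ∣ c := by
    have hmod2 := hmod.of_dvd (even_iff_two_dvd.mp hG)
    rw [Nat.ModEq, Nat.mul_mod, Nat.even_iff.mp hb, mul_zero] at hmod2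
    omega
  rw [hc, mul_comm a c]
  exact Nat.mul_dvd_mul_right hc2 a

end IsCyclic

theorem Nat.even_of_two_mul_sub_one_dvd_pow_sub_one {k m : ℕ} (hk : Odd k) (hk1 : 1 < k)
    (h : 2 * (k - 1) ∣ k ^ m - 1) : Even m := by
  have hgeom : k ^ m - 1 = (k - 1) * ∑ i ∈ Finset.range m, k ^ i := by
    have := geom_sum_mul_add (k - 1) m
    rw [Nat.sub_add_cancel hk1.le] at this
    rw [← this, mul_comm, Nat.add_sub_cancel]
  rw [hgeom, mul_comm 2] at h
  have hsum : ¬Odd (∑ i ∈ Finset.range m, k ^ i) :=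
    Nat.not_odd_iff_even.mpr (even_iff_two_dvd.mpr (Nat.dvd_of_mul_dvd_mul_left (by omega) h))
  rwa [Finset.odd_sum_iff_odd_card_odd, Finset.filter_true_of_mem fun i _ => hk.pow,
    Finset.card_range, Nat.not_odd_iff_even] at hsum

theorem forall_pow_eq_self_exists_pow_eq_iff_units {K : Type*} [GroupWithZero K] {k b : ℕ}
    (hk : 0 < k) :
    (∀ u : K, u ≠ 0 → u ^ k = u → ∃ v : K, v ≠ 0 ∧ v ^ b = u) ↔
      ∀ x : Kˣ, x ^ (k - 1) = 1 → ∃ y : Kˣ, y ^ b = x := by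
  have hpow : ∀ x : Kˣ, (x : K) ^ k = x ↔ x ^ (k - 1) = 1 := fun x => by
    rw [← Units.val_pow_eq_pow_val, Units.val_inj, ← pow_sub_one_mul hk.ne', mul_eq_right]
  constructor
  · intro h x hx
    obtain ⟨v, hv, hvx⟩ := h x x.ne_zero ((hpow x).mpr hx)
    exact ⟨Units.mk0 v hv, Units.ext (by simpa using hvx)⟩
  · intro h u hu huk
    obtain ⟨y, hy⟩ := h (Units.mk0 u hu) ((hpow _).mp huk)
    exact ⟨y, y.ne_zero, by simpa using congrArg Units.val hy⟩

theorem exists_pow_eq_iff_two_mul_dvd_general (p e l : ℕ) [Fact p.Prime] (hodd : Odd p)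
    (he : 0 < e) (hle : l ∣ e) :
    (∀ u : GaloisField p e, u ≠ 0 → u ^ p ^ l = u →
      ∃ v : GaloisField p e, v ≠ 0 ∧ v ^ (p ^ l + 1) = u) ↔ 2 * l ∣ e := by
  have hp : 1 < p := (Fact.out : p.Prime).one_lt
  obtain ⟨m, rfl⟩ := hle
  have hl : l ≠ 0 := by rintro rfl; simp at he
  have hN : Nat.card (GaloisField p (l * m))ˣ = (p ^ l) ^ m - 1 := by
    rw [Nat.card_units, GaloisField.card p _ he.ne', pow_mul]
  rw [forall_pow_eq_self_exists_pow_eq_iff_units (pow_pos (by omega) l)]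
  constructor
  · intro h
    have hdvd := IsCyclic.two_mul_dvd_card_of_forall_pow_eq_one_exists_pow_eq
      (by rw [hN]; exact Nat.Odd.sub_odd hodd.pow.pow odd_one)
      (by rw [hN]; exact Nat.sub_one_dvd_pow_sub_one _ m) hodd.pow.add_one h
    rw [hN] at hdvd
    obtain ⟨n, rfl⟩ :=
      Nat.even_of_two_mul_sub_one_dvd_pow_sub_one hodd.pow (Nat.one_lt_pow hl hp) hdvd
    exact ⟨n, by ring⟩
  · rintro ⟨n, hn⟩ x hx
    obtain rfl : m = 2 * n := by
      apply Nat.eq_of_mul_eq_mul_left (Nat.pos_of_ne_zero hl)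
      rw [hn]; ring
    refine IsCyclic.exists_pow_eq_of_pow_eq_one ?_ hx
    rw [hN, mul_comm, ← mul_self_tsub_one, ← sq]
    exact Nat.pow_sub_one_dvd_pow_sub_one _ (dvd_mul_right 2 n)

/-- Lemma 4: let `q = p^e` with `p` an odd prime and `0 ≤ l ≤ e - 1` with
`l ∣ e` (so that `F_{p^l}` is a subfield of `F_q`, its nonzero elements being exactly the
`u ≠ 0` with `u^{p^l} = u`).  Then every `u ∈ F_{p^l}^*` has the form `v^{p^l + 1}` for some
`v ∈ F_q^*` if and only if `2l ∣ e`. -/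
theorem exists_pow_eq_iff_two_mul_dvd (p e l : ℕ) [Fact p.Prime] (hodd : Odd p)
    (he : 0 < e) (hl : l ≤ e - 1) (hle : l ∣ e) :
    (∀ u : GaloisField p e, u ≠ 0 → u ^ p ^ l = u →
      ∃ v : GaloisField p e, v ≠ 0 ∧ v ^ (p ^ l + 1) = u) ↔ 2 * l ∣ e :=
  exists_pow_eq_iff_two_mul_dvd_general p e l hodd he hle
end

section
/- Let q = p^e with p an odd prime and let 0 ≤ l ≤ e−1 with 2l dividing e. Let n ≤ p^l. Then for any 1 ≤ k ≤ ⌊n/2⌋ and any integer h with 0 ≤ h ≤ k, there exists an [n,k]_q MDS linear code C over F_q whose l-Galois hull Hull_l(C) = C ∩ C^{⊥_l} has dimension exactly h. -/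
open Finset

/-- The Hamming weight of a vector: the number of nonzero coordinates. -/
noncomputable def wt {F : Type*} [Zero F] {n : ℕ} (x : Fin n → F) : ℕ :=
  Set.ncard {i | x i ≠ 0}

/-- The `l`-Galois hull `Hull_l(C) = C ∩ C^{⊥_l}` of a linear code. -/
def galoisHull (p l : ℕ) [Fact p.Prime] {F : Type*} [Field F] [CharP F p] {n : ℕ}
    (C : Submodule F (Fin n → F)) : Submodule F (Fin n → F) :=
  C ⊓ galoisDual p l C

/-- `C` is an `[n, k]` MDS code: it has dimension `k` and minimum Hamming distance
exactly `n - k + 1`. -/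
def IsMDSCode {F : Type*} [Field F] {n : ℕ} (C : Submodule F (Fin n → F)) (k : ℕ) : Prop :=
  Module.finrank F C = k ∧
    (∀ x ∈ C, x ≠ 0 → n - k + 1 ≤ wt x) ∧
    (∃ x ∈ C, x ≠ 0 ∧ wt x = n - k + 1)


/-!
Take a generalized Reed–Solomon code `GRS_k(a, v)` whose nodes `a i` lie in the subfield
`𝔽_{p^l}` of `𝔽_{p^e}` (it exists since `l ∣ e`). The nodal weights `u i` satisfy
`∑ i, u i * P (a i) = 0` whenever `deg P < n - 1`, and they lie in `𝔽_{p^l}`. Choose signs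
`ε i = ±1`, equal to `-1` exactly on a set `S` of `k - h` nodes; as `2l ∣ e`, every nonzero
element of `𝔽_{p^l}` is a `(p^l + 1)`-th power in `𝔽_{p^e}`, so we may take
`v i ^ (p^l + 1) = ε i * u i`. Because `2k ≤ n`, the `l`-Galois pairing of the codewords of
messages `g` and `f` is then `-2 ∑_{i ∈ S} u i g(a i) f(a i)^{p^l}`. As `g` interpolates
arbitrary values on `S`, the hull consists of the codewords of messages vanishing on `S`,
a space of dimension `k - #S = h`.
-/

open Polynomial

lemma wt_eq_card_filter {F : Type*} [Zero F] [DecidableEq F] {n : ℕ} (x : Fin n → F) :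
    wt x = #{i | x i ≠ 0} := by
  rw [wt, ← Set.ncard_coe_finset, coe_filter]
  simp only [mem_univ, true_and]

lemma mem_galoisDual_iff {p l : ℕ} [Fact p.Prime] {F : Type*} [Field F] [CharP F p] {n : ℕ}
    {C : Submodule F (Fin n → F)} {x : Fin n → F} :
    x ∈ galoisDual p l C ↔ ∀ y ∈ C, ∑ i, y i * x i ^ p ^ l = 0 :=
  Iff.rfl

lemma Polynomial.finrank_degreeLT (R : Type*) [Ring R] [StrongRankCondition R] (k : ℕ) :
    Module.finrank R (degreeLT R k) = k :=
  (degreeLTEquiv R k).finrank_eq.trans (Module.finrank_fin_fun R)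

lemma Polynomial.natDegree_lt_of_mem_degreeLT {R : Type*} [Semiring R] {k : ℕ} {f : R[X]}
    (hf : f ∈ degreeLT R k) (hf0 : f ≠ 0) : f.natDegree < k :=
  (natDegree_lt_iff_degree_lt hf0).mpr (mem_degreeLT.mp hf)

lemma Polynomial.degree_mul_lt_of_mem_degreeLT {R : Type*} [Semiring R] [NoZeroDivisors R]
    {k n : ℕ} {f g : R[X]} (hf : f ∈ degreeLT R k) (hg : g ∈ degreeLT R k) (h2k : 2 * k ≤ n) :
    (f * g).degree < ↑(n - 1) := by
  by_cases hfg : f * g = 0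
  · rw [hfg, degree_zero]
    exact WithBot.bot_lt_coe _
  obtain ⟨hf0, hg0⟩ := mul_ne_zero_iff.mp hfg
  have := natDegree_lt_of_mem_degreeLT hf hf0
  have := natDegree_lt_of_mem_degreeLT hg hg0
  rw [degree_eq_natDegree hfg, natDegree_mul hf0 hg0]
  exact_mod_cast (by omega : f.natDegree + g.natDegree < n - 1)

lemma Polynomial.card_filter_eval_eq_zero_le_natDegree {R ι : Type*} [CommRing R] [IsDomain R]
    [Fintype ι] [DecidableEq R] {a : ι → R} (ha : Function.Injective a) {f : R[X]} (hf : f ≠ 0) :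
    #{i | f.eval (a i) = 0} ≤ f.natDegree := by
  by_contra! hlt
  refine hf (eq_zero_of_natDegree_lt_card_of_eval_eq_zero f
    (f := fun i : ({i | f.eval (a i) = 0} : Finset ι) => a i)
    (ha.comp Subtype.val_injective) (fun i => (mem_filter.mp i.2).2) ?_)
  rwa [Fintype.card_coe]

lemma Lagrange.sum_nodalWeight_mul_eval_eq_zero {F ι : Type*} [Field F] [DecidableEq ι]
    {s : Finset ι} {v : ι → F} (hvs : Set.InjOn v s) {P : F[X]} (hP : P.degree < ↑(#s - 1)) :
    ∑ i ∈ s, nodalWeight s v i * P.eval (v i) = 0 := by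
  have hcoeff := coeff_eq_sum hvs (hP.trans_le (by exact_mod_cast Nat.sub_le _ 1))
  rw [coeff_eq_zero_of_degree_lt hP] at hcoeff
  rw [hcoeff]
  refine sum_congr rfl fun i _ => ?_
  rw [nodalWeight, prod_inv_distrib, div_eq_mul_inv, mul_comm]

lemma Nat.pow_add_one_mul_pow_sub_one_dvd (p : ℕ) {l e : ℕ} (h : 2 * l ∣ e) :
    (p ^ l + 1) * (p ^ l - 1) ∣ p ^ e - 1 := by
  obtain ⟨t, rfl⟩ := h
  have hsq : (p ^ l + 1) * (p ^ l - 1) = (p ^ l) ^ 2 - 1 ^ 2 := (Nat.sq_sub_sq _ _).symm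
  have hpow : p ^ (2 * l * t) = ((p ^ l) ^ 2) ^ t := by ring
  rw [hsq, hpow, one_pow]
  simpa using Nat.sub_dvd_pow_sub_pow ((p ^ l) ^ 2) 1 t

/-- In a cyclic group of order `N` with `d ∣ N`, the `d`-th powers form the kernel of
`x ↦ x ^ (N / d)`: both subgroups have order `N / d`. -/
theorem IsCyclic.exists_pow_eq_of_pow_eq_one_s5 {G : Type*} [CommGroup G] [IsCyclic G] [Finite G]
    {d m : ℕ} (hdm : d * m ∣ Nat.card G) {u : G} (hu : u ^ m = 1) : ∃ v, v ^ d = u := by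
  obtain ⟨c, hc⟩ := hdm
  have hN : Nat.card G ≠ 0 := Nat.card_pos.ne'
  have hd : d ≠ 0 := by rintro rfl; simp_all
  have hNd : Nat.card G / d = m * c := by rw [hc, mul_assoc, Nat.mul_div_cancel_left _ (by omega)]
  have hrange : (powMonoidHom d : G →* G).range = (powMonoidHom (m * c) : G →* G).ker := by
    apply Subgroup.eq_of_le_of_card_ge
    · rintro _ ⟨v, rfl⟩
      rw [MonoidHom.mem_ker, powMonoidHom_apply, powMonoidHom_apply, ← pow_mul, ← mul_assoc, ← hc,
        pow_card_eq_one']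
    · rw [IsCyclic.card_powMonoidHom_range, IsCyclic.card_powMonoidHom_ker, ← hNd,
        Nat.gcd_eq_right (Nat.div_dvd_of_dvd ⟨m * c, by rw [hc, mul_assoc]⟩),
        Nat.gcd_eq_right ⟨m * c, by rw [hc, mul_assoc]⟩]
  have hu' : u ∈ (powMonoidHom (m * c) : G →* G).ker := by
    rw [MonoidHom.mem_ker, powMonoidHom_apply, pow_mul, hu, one_pow]
  rw [← hrange] at hu'
  exact hu'

theorem FiniteField.exists_pow_succ_eq {K : Type*} [Field K] [Finite K] {m : ℕ}
    (hm : (m + 1) * (m - 1) ∣ Nat.card K - 1) {u : K} (hu : u ≠ 0) (hum : u ^ m = u) :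
    ∃ v : K, v ^ (m + 1) = u := by
  have hu1 : (Units.mk0 u hu) ^ (m - 1) = 1 := by
    ext
    rcases m with _ | m
    · simp
    · simpa [pow_succ, hu] using hum
  obtain ⟨v, hv⟩ := IsCyclic.exists_pow_eq_of_pow_eq_one_s5 (by rwa [Nat.card_units]) hu1
  exact ⟨v, by simpa using congrArg Units.val hv⟩

theorem GaloisField.exists_injective_pow_eq_self {p : ℕ} [Fact p.Prime] {e l n : ℕ} (he : e ≠ 0)
    (hle : l ∣ e) (hn : n ≤ p ^ l) :
    ∃ a : Fin n → GaloisField p e, Function.Injective a ∧ ∀ i, a i ^ p ^ l = a i := by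
  have hl : l ≠ 0 := by rintro rfl; exact he (zero_dvd_iff.mp hle)
  obtain ⟨φ⟩ : Nonempty (GaloisField p l →ₐ[ZMod p] GaloisField p e) :=
    FiniteField.nonempty_algHom_of_finrank_dvd
      (by rwa [GaloisField.finrank p hl, GaloisField.finrank p he])
  let := Fintype.ofFinite (GaloisField p l)
  have hcard : Fintype.card (GaloisField p l) = p ^ l := by
    rw [Fintype.card_eq_nat_card, GaloisField.card p l hl]
  obtain ⟨ι⟩ := Function.Embedding.nonempty_of_card_le (α := Fin n) (β := GaloisField p l)
    (by rwa [Fintype.card_fin, hcard])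
  refine ⟨φ ∘ ι, φ.toRingHom.injective.comp ι.injective, fun i => ?_⟩
  rw [Function.comp_apply, ← map_pow, ← hcard, FiniteField.pow_card]

noncomputable section GeneralizedReedSolomon

variable {F : Type*} [Field F] {n : ℕ}

/-- The encoder of the generalized Reed–Solomon code `GRS_k(a, v)`. -/
def grsEncode (a v : Fin n → F) (k : ℕ) : degreeLT F k →ₗ[F] (Fin n → F) :=
  LinearMap.pi fun i => v i • leval (a i) ∘ₗ (degreeLT F k).subtype

def grsCode (a v : Fin n → F) (k : ℕ) : Submodule F (Fin n → F) :=
  LinearMap.range (grsEncode a v k)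

@[simp]
lemma grsEncode_apply (a v : Fin n → F) (k : ℕ) (f : degreeLT F k) (i : Fin n) :
    grsEncode a v k f i = v i * (f : F[X]).eval (a i) :=
  rfl

variable {a v : Fin n → F} {k : ℕ}

lemma grsEncode_injective (ha : Function.Injective a) (hv : ∀ i, v i ≠ 0) (hkn : k ≤ n) :
    Function.Injective (grsEncode a v k) := by
  rw [← LinearMap.ker_eq_bot, Submodule.eq_bot_iff]
  rintro ⟨f, hf⟩ hker
  ext1
  by_contra hf0
  refine hf0 (eq_zero_of_natDegree_lt_card_of_eval_eq_zero f ha (fun i => ?_) ?_)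
  · simpa [hv i] using congrFun (LinearMap.mem_ker.mp hker) i
  · rw [Fintype.card_fin]
    exact (natDegree_lt_of_mem_degreeLT hf hf0).trans_le hkn

lemma finrank_grsCode (ha : Function.Injective a) (hv : ∀ i, v i ≠ 0) (hkn : k ≤ n) :
    Module.finrank F (grsCode a v k) = k := by
  rw [grsCode, LinearMap.finrank_range_of_inj (grsEncode_injective ha hv hkn), finrank_degreeLT]

lemma wt_grsEncode [DecidableEq F] (hv : ∀ i, v i ≠ 0) (f : degreeLT F k) :
    wt (grsEncode a v k f) = n - #{i | (f : F[X]).eval (a i) = 0} := by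
  have hsplit :=
    card_filter_add_card_filter_not (s := univ) (p := fun i => (f : F[X]).eval (a i) = 0)
  rw [card_univ, Fintype.card_fin] at hsplit
  rw [wt_eq_card_filter]
  simp only [grsEncode_apply, ne_eq, mul_eq_zero, hv, false_or]
  omega

lemma le_wt_of_mem_grsCode (ha : Function.Injective a) (hv : ∀ i, v i ≠ 0) (hkn : k ≤ n)
    {x : Fin n → F} (hx : x ∈ grsCode a v k) (hx0 : x ≠ 0) : n - k + 1 ≤ wt x := by
  classical
  obtain ⟨f, rfl⟩ := hx
  have hf0 : (f : F[X]) ≠ 0 := fun h => hx0 (by rw [show f = 0 from Subtype.ext h, map_zero])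
  have hzeros := card_filter_eval_eq_zero_le_natDegree ha hf0
  have hdeg := natDegree_lt_of_mem_degreeLT f.2 hf0
  rw [wt_grsEncode hv]
  omega

/-- The message `∏_{j ∈ T} (X - a j)` with `#T = k - 1` vanishes at exactly `k - 1` nodes. -/
lemma exists_mem_grsCode_wt_eq (ha : Function.Injective a) (hv : ∀ i, v i ≠ 0) (hk : 1 ≤ k)
    (hkn : k ≤ n) : ∃ x ∈ grsCode a v k, x ≠ 0 ∧ wt x = n - k + 1 := by
  classical
  obtain ⟨T, -, hT⟩ := exists_subset_card_eq (s := (univ : Finset (Fin n))) (n := k - 1)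
    (by rw [card_univ, Fintype.card_fin]; omega)
  set f : F[X] := Lagrange.nodal T a
  have hf : f ∈ degreeLT F k := by
    rw [mem_degreeLT, Lagrange.degree_nodal, hT]
    exact_mod_cast Nat.sub_lt hk one_pos
  have hzeros : ({i | f.eval (a i) = 0} : Finset (Fin n)) = T := by
    ext i
    simp [f, Lagrange.eval_nodal, prod_eq_zero_iff, sub_eq_zero, ha.eq_iff]
  have hwt : wt (grsEncode a v k ⟨f, hf⟩) = n - k + 1 := by
    rw [wt_grsEncode hv, hzeros, hT]
    omega
  refine ⟨_, ⟨⟨f, hf⟩, rfl⟩, fun h0 => ?_, hwt⟩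
  rw [h0] at hwt
  simp [wt] at hwt

theorem isMDSCode_grsCode (ha : Function.Injective a) (hv : ∀ i, v i ≠ 0) (hk : 1 ≤ k)
    (hkn : k ≤ n) : IsMDSCode (grsCode a v k) k :=
  ⟨finrank_grsCode ha hv hkn, fun _ => le_wt_of_mem_grsCode ha hv hkn,
    exists_mem_grsCode_wt_eq ha hv hk hkn⟩

end GeneralizedReedSolomon

noncomputable section EvalOnDegreeLT

variable {F ι : Type*} [Field F] [DecidableEq ι]

def evalOnDegreeLT (a : ι → F) (S : Finset ι) (k : ℕ) : degreeLT F k →ₗ[F] (S → F) :=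
  LinearMap.pi fun i => leval (a i) ∘ₗ (degreeLT F k).subtype

lemma evalOnDegreeLT_surjective {a : ι → F} {S : Finset ι} {k : ℕ} (ha : Set.InjOn a S)
    (hk : #S ≤ k) : Function.Surjective (evalOnDegreeLT a S k) := fun r =>
  ⟨⟨_, degreeLT_mono hk ((Lagrange.funEquivDegreeLT ha).symm r).2⟩,
    (Lagrange.funEquivDegreeLT ha).apply_symm_apply r⟩

lemma finrank_ker_evalOnDegreeLT {a : ι → F} {S : Finset ι} {k : ℕ} (ha : Set.InjOn a S)
    (hk : #S ≤ k) : Module.finrank F (LinearMap.ker (evalOnDegreeLT a S k)) = k - #S := by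
  have hrank := LinearMap.finrank_range_add_finrank_ker (evalOnDegreeLT a S k)
  rw [LinearMap.range_eq_top.mpr (evalOnDegreeLT_surjective ha hk), finrank_top,
    Module.finrank_fintype_fun_eq_card, Fintype.card_coe, finrank_degreeLT] at hrank
  omega

end EvalOnDegreeLT

section GaloisHull

variable {p l : ℕ} [Fact p.Prime] {F : Type*} [Field F] [CharP F p]

lemma Polynomial.eval_pow_eq_eval_map_iterateFrobenius {x : F} (hx : x ^ p ^ l = x) (f : F[X]) :
    f.eval x ^ p ^ l = (f.map (iterateFrobenius F p l)).eval x := by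
  have hσx : iterateFrobenius F p l x = x := hx
  rw [eval_map, ← hσx, eval₂_hom, hσx, iterateFrobenius_def]

lemma Lagrange.nodalWeight_pow_eq_self {ι : Type*} [DecidableEq ι] {s : Finset ι} {a : ι → F}
    (ha : ∀ i, a i ^ p ^ l = a i) (i : ι) : nodalWeight s a i ^ p ^ l = nodalWeight s a i := by
  simp only [nodalWeight, ← prod_pow, inv_pow, sub_pow_char_pow, ha]

variable {n k : ℕ} {a v : Fin n → F} {S : Finset (Fin n)}

lemma sum_grsEncode_mul_pow (ha : Function.Injective a) (hfix : ∀ i, a i ^ p ^ l = a i)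
    (hv : ∀ i, v i ^ (p ^ l + 1) = (if i ∈ S then -1 else 1) * Lagrange.nodalWeight univ a i)
    (h2k : 2 * k ≤ n) (f g : degreeLT F k) :
    ∑ i, grsEncode a v k g i * grsEncode a v k f i ^ p ^ l =
      -2 * ∑ i ∈ S, Lagrange.nodalWeight univ a i * (g : F[X]).eval (a i) *
        (f : F[X]).eval (a i) ^ p ^ l := by
  set w : Fin n → F := fun i =>
    Lagrange.nodalWeight univ a i * (g : F[X]).eval (a i) * (f : F[X]).eval (a i) ^ p ^ l
  have hterm : ∀ i, grsEncode a v k g i * grsEncode a v k f i ^ p ^ l =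
      w i - 2 * if i ∈ S then w i else 0 := by
    intro i
    have hv' : grsEncode a v k g i * grsEncode a v k f i ^ p ^ l =
        v i ^ (p ^ l + 1) * ((g : F[X]).eval (a i) * (f : F[X]).eval (a i) ^ p ^ l) := by
      simp only [grsEncode_apply]
      ring
    rw [hv', hv i]
    split_ifs <;> ring
  have hfσ : (f : F[X]).map (iterateFrobenius F p l) ∈ degreeLT F k :=
    mem_degreeLT.mpr (degree_map_le.trans_lt (mem_degreeLT.mp f.2))
  have hsum : ∑ i, w i = 0 := by
    simp only [w, eval_pow_eq_eval_map_iterateFrobenius (hfix _), mul_assoc, ← eval_mul]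
    refine Lagrange.sum_nodalWeight_mul_eval_eq_zero ha.injOn ?_
    rw [card_univ, Fintype.card_fin]
    exact degree_mul_lt_of_mem_degreeLT g.2 hfσ h2k
  rw [sum_congr rfl fun i _ => hterm i, sum_sub_distrib, ← mul_sum, sum_ite_mem, univ_inter,
    hsum, zero_sub, neg_mul]

lemma grsEncode_mem_galoisDual_iff (hp : p ≠ 2) (ha : Function.Injective a)
    (hfix : ∀ i, a i ^ p ^ l = a i)
    (hv : ∀ i, v i ^ (p ^ l + 1) = (if i ∈ S then -1 else 1) * Lagrange.nodalWeight univ a i)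
    (h2k : 2 * k ≤ n) (hS : #S ≤ k) (f : degreeLT F k) :
    grsEncode a v k f ∈ galoisDual p l (grsCode a v k) ↔ ∀ i ∈ S, (f : F[X]).eval (a i) = 0 := by
  have hpl : p ^ l ≠ 0 := pow_ne_zero _ (Fact.out : p.Prime).ne_zero
  rw [mem_galoisDual_iff]
  constructor
  · intro hdual j hj
    have hbasis : Lagrange.basis S a j ∈ degreeLT F k := by
      have := card_pos.mpr ⟨j, hj⟩
      rw [mem_degreeLT, Lagrange.degree_basis ha.injOn hj]
      exact_mod_cast (by omega : #S - 1 < k)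
    have h := hdual _ ⟨⟨_, hbasis⟩, rfl⟩
    rw [sum_grsEncode_mul_pow ha hfix hv h2k, sum_eq_single_of_mem j hj fun i hi hij => by
      rw [Lagrange.eval_basis_of_ne (Ne.symm hij) hi, mul_zero, zero_mul],
      Lagrange.eval_basis_self ha.injOn hj] at h
    have h2 : (2 : F) ≠ 0 := Ring.two_ne_zero (by rwa [ringChar.eq F p])
    refine (pow_eq_zero_iff hpl).mp ?_
    simpa [h2, Lagrange.nodalWeight_ne_zero ha.injOn (mem_univ j)] using h
  · rintro hzero _ ⟨g, rfl⟩
    rw [sum_grsEncode_mul_pow ha hfix hv h2k,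
      sum_eq_zero fun i hi => by rw [hzero i hi, zero_pow hpl, mul_zero], mul_zero]

lemma galoisHull_grsCode_eq_map (hp : p ≠ 2) (ha : Function.Injective a)
    (hfix : ∀ i, a i ^ p ^ l = a i)
    (hv : ∀ i, v i ^ (p ^ l + 1) = (if i ∈ S then -1 else 1) * Lagrange.nodalWeight univ a i)
    (h2k : 2 * k ≤ n) (hS : #S ≤ k) :
    galoisHull p l (grsCode a v k) =
      (LinearMap.ker (evalOnDegreeLT a S k)).map (grsEncode a v k) := by
  ext x
  simp only [galoisHull, Submodule.mem_inf, Submodule.mem_map, LinearMap.mem_ker]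
  constructor
  · rintro ⟨⟨f, rfl⟩, hdual⟩
    have hzero := (grsEncode_mem_galoisDual_iff hp ha hfix hv h2k hS f).mp hdual
    exact ⟨f, funext fun i => hzero i i.2, rfl⟩
  · rintro ⟨f, hf, rfl⟩
    exact ⟨⟨f, rfl⟩, (grsEncode_mem_galoisDual_iff hp ha hfix hv h2k hS f).mpr
      fun i hi => congrFun hf ⟨i, hi⟩⟩

theorem finrank_galoisHull_grsCode (hp : p ≠ 2) (ha : Function.Injective a)
    (hfix : ∀ i, a i ^ p ^ l = a i) (hv0 : ∀ i, v i ≠ 0)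
    (hv : ∀ i, v i ^ (p ^ l + 1) = (if i ∈ S then -1 else 1) * Lagrange.nodalWeight univ a i)
    (h2k : 2 * k ≤ n) (hS : #S ≤ k) :
    Module.finrank F (galoisHull p l (grsCode a v k)) = k - #S := by
  rw [galoisHull_grsCode_eq_map hp ha hfix hv h2k hS,
    ← (Submodule.equivMapOfInjective _ (grsEncode_injective ha hv0 (by omega)) _).finrank_eq,
    finrank_ker_evalOnDegreeLT ha.injOn hS]

end GaloisHull

theorem exists_mds_code_galoisHull_dim_of_le_subfield_card_general
    (p e l n k h : ℕ) [Fact p.Prime] (hodd : Odd p) (he : 0 < e)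
    (h2l : 2 * l ∣ e) (hn : n ≤ p ^ l) (hk1 : 1 ≤ k) (hk2 : k ≤ n / 2)
    (hh : h ≤ k) :
    ∃ C : Submodule (GaloisField p e) (Fin n → GaloisField p e),
      IsMDSCode C k ∧
      Module.finrank (GaloisField p e) (galoisHull p l C) = h := by
  classical
  obtain ⟨a, ha, hfix⟩ :=
    GaloisField.exists_injective_pow_eq_self he.ne' (dvd_of_mul_left_dvd h2l) hn
  obtain ⟨S, -, hS⟩ := exists_subset_card_eq (s := (univ : Finset (Fin n))) (n := k - h)
    (by rw [card_univ, Fintype.card_fin]; omega)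
  set c : Fin n → GaloisField p e := fun i =>
    (if i ∈ S then -1 else 1) * Lagrange.nodalWeight univ a i
  have hc0 : ∀ i, c i ≠ 0 := fun i =>
    mul_ne_zero (by split_ifs <;> simp) (Lagrange.nodalWeight_ne_zero ha.injOn (mem_univ i))
  have hcfix : ∀ i, c i ^ p ^ l = c i := fun i => by
    simp only [c, mul_pow, Lagrange.nodalWeight_pow_eq_self hfix]
    split_ifs
    · rw [(hodd.pow).neg_one_pow]
    · rw [one_pow]
  have hcard : (p ^ l + 1) * (p ^ l - 1) ∣ Nat.card (GaloisField p e) - 1 := by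
    rw [GaloisField.card p e he.ne']
    exact Nat.pow_add_one_mul_pow_sub_one_dvd p h2l
  choose v hv using fun i => FiniteField.exists_pow_succ_eq hcard (hc0 i) (hcfix i)
  have hv0 : ∀ i, v i ≠ 0 := fun i => (pow_ne_zero_iff (Nat.succ_ne_zero _)).mp (hv i ▸ hc0 i)
  refine ⟨grsCode a v k, isMDSCode_grsCode ha hv0 hk1 (by omega), ?_⟩
  rw [finrank_galoisHull_grsCode (hodd.ne_two_of_dvd_nat dvd_rfl) ha hfix hv0 hv (by omega)
    (by omega), hS]
  omega

/-- Theorem 2: let `q = p^e` with `p` an odd prime, `0 ≤ l ≤ e - 1` with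
`2l ∣ e`, and `n ≤ p^l`.  Then for every `1 ≤ k ≤ ⌊n/2⌋` and `0 ≤ h ≤ k` there is an
`[n, k]_q` MDS code whose `l`-Galois hull has dimension exactly `h`. -/
theorem exists_mds_code_galoisHull_dim_of_le_subfield_card
    (p e l n k h : ℕ) [Fact p.Prime] (hodd : Odd p) (he : 0 < e) (hl : l ≤ e - 1)
    (h2l : 2 * l ∣ e) (hn : n ≤ p ^ l) (hk1 : 1 ≤ k) (hk2 : k ≤ n / 2)
    (hh : h ≤ k) :
    ∃ C : Submodule (GaloisField p e) (Fin n → GaloisField p e),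
      IsMDSCode C k ∧
      Module.finrank (GaloisField p e) (galoisHull p l C) = h :=
  exists_mds_code_galoisHull_dim_of_le_subfield_card_general p e l n k h hodd he h2l hn hk1 hk2 hh
end

section
/- Let q = p^e be a prime power with l dividing e. Let α be a primitive element of F_q, ξ_1 = α^{x_1}, ξ_2 = α^{x_2}, and assume (q−1) | lcm(x_1,x_2) and gcd(x_2, q−1) | x_1(p^l − 1). Let n = r_1 r_2 where 1 ≤ r_1 ≤ ord(ξ_1) and r_2 = ord(ξ_2), and let {a_1,…,a_n} = ∪_{i=1}^{r_1} R_i where R_i = {ξ_1^i ξ_2^j : j = 1,…,r_2} (these n elements are distinct). If a_i ∈ R_s, so a_i = ξ_1^s ξ_2^t for some 1 ≤ t ≤ r_2, then u_i := Π_{1≤j≤n, j≠i} (a_i − a_j)^{−1} satisfies u_i = a_i · ξ_1^{−s r_2} · r_2^{−1} · Π_{1≤s'≤r_1, s'≠s} (ξ_1^{s r_2} − ξ_1^{s' r_2})^{−1}, and moreover a_i^{−1} u_i ∈ F_{p^l}^*. -/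
/-! Because `(q - 1) ∣ lcm(x₁, x₂)`, the cyclic groups `⟨ξ₁⟩` and `⟨ξ₂⟩` meet trivially, so
`(s, t) ↦ ξ₁^s ξ₂^t` is injective. As `ξ₂` is a primitive `r₂`-th root of unity, the node
polynomial `∏_{b ∈ A} (X - b)` is `g(X^{r₂})` with `g = ∏_{s'} (Y - ξ₁^{s' r₂})`, and
`∏_{b ≠ a} (a - b)` is its derivative at `a`, which the chain rule evaluates to
`r₂ a^{r₂-1} g'(ξ₁^{s r₂})`. Finally `q - 1 = r₂ gcd(x₂, q - 1)` divides `x₁ r₂ (p^l - 1)`, so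
`β = ξ₁^{r₂}` is fixed by the `p^l`-power Frobenius, and so is `a⁻¹ u`, a rational expression
in `β`. -/

open Finset Polynomial Lagrange Subgroup

section Group

variable {G : Type*}

theorem pow_injOn_Icc_orderOf [LeftCancelMonoid G] (x : G) :
    Set.InjOn (x ^ ·) ↑(Icc 1 (orderOf x)) := by
  intro n hn m hm hnm
  simp only [coe_Icc, Set.mem_Icc] at hn hm
  have hpred : x ^ (n - 1) = x ^ (m - 1) := by
    apply mul_left_cancel (a := x)
    rwa [← pow_succ', ← pow_succ', Nat.sub_add_cancel hn.1, Nat.sub_add_cancel hm.1]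
  have := pow_injOn_Iio_orderOf (x := x) (show n - 1 < orderOf x by omega)
    (show m - 1 < orderOf x by omega) hpred
  omega

theorem disjoint_zpowers_pow_of_orderOf_dvd_lcm [Group G] {α : G} {x₁ x₂ : ℕ}
    (hx₁ : x₁ ≠ 0) (hx₂ : x₂ ≠ 0) (h : orderOf α ∣ Nat.lcm x₁ x₂) :
    Disjoint (zpowers (α ^ x₁)) (zpowers (α ^ x₂)) := by
  -- Split `lcm x₁ x₂ = L₁ * L₂` into coprime `L₁ ∣ x₁`, `L₂ ∣ x₂`: a common element is killed
  -- by both `L₁` and `L₂`.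
  set L₁ := Nat.factorizationLCMLeft x₁ x₂
  set L₂ := Nat.factorizationLCMRight x₁ x₂
  have hL : orderOf α ∣ L₁ * L₂ := by
    rwa [Nat.factorizationLCMLeft_mul_factorizationLCMRight hx₁ hx₂]
  have h₁ : (α ^ x₁) ^ L₂ = 1 := by
    rw [← pow_mul, ← orderOf_dvd_iff_pow_eq_one]
    exact hL.trans (mul_dvd_mul_right (Nat.factorizationLCMLeft_dvd_left x₁ x₂) _)
  have h₂ : (α ^ x₂) ^ L₁ = 1 := by
    rw [← pow_mul, ← orderOf_dvd_iff_pow_eq_one, mul_comm x₂]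
    exact hL.trans (mul_dvd_mul_left _ (Nat.factorizationLCMRight_dvd_right x₁ x₂))
  rw [disjoint_def]
  rintro _ ⟨i, rfl⟩ ⟨j, hj⟩
  dsimp only at hj ⊢
  have hy₂ : ((α ^ x₁) ^ i) ^ L₂ = 1 := by
    rw [← zpow_natCast, ← zpow_mul, mul_comm, zpow_mul, zpow_natCast, h₁, one_zpow]
  have hy₁ : ((α ^ x₁) ^ i) ^ L₁ = 1 := by
    rw [← hj, ← zpow_natCast, ← zpow_mul, mul_comm, zpow_mul, zpow_natCast, h₂, one_zpow]
  rw [← pow_one ((α ^ x₁) ^ i),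
    ← (Nat.coprime_factorizationLCMLeft_factorizationLCMRight x₁ x₂).gcd_eq_one]
  exact pow_gcd_eq_one.mpr ⟨hy₁, hy₂⟩

theorem injOn_pow_mul_pow_of_disjoint [Group G] {g h : G} (hgh : Disjoint (zpowers g) (zpowers h))
    {r : ℕ} (hr : r ≤ orderOf g) :
    Set.InjOn (fun st : ℕ × ℕ => g ^ st.1 * h ^ st.2) ↑(Icc 1 r ×ˢ Icc 1 (orderOf h)) := by
  rintro ⟨s, t⟩ hst ⟨s', t'⟩ hst' heq
  simp only [coe_product, Set.mem_prod, mem_coe] at hst hst' heq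
  have hcommon : (g ^ s')⁻¹ * g ^ s = h ^ t' * (h ^ t)⁻¹ := by
    rw [inv_mul_eq_iff_eq_mul, ← mul_assoc, ← heq, mul_inv_cancel_right]
  have hs : g ^ s' = g ^ s := inv_mul_eq_one.mp <| disjoint_def.mp hgh
    (mul_mem (inv_mem (pow_mem (mem_zpowers g) _)) (pow_mem (mem_zpowers g) _))
    (hcommon ▸ mul_mem (pow_mem (mem_zpowers h) _) (inv_mem (pow_mem (mem_zpowers h) _)))
  rw [← hs, mul_left_cancel_iff] at heq
  have hr' : Icc 1 r ⊆ Icc 1 (orderOf g) := Icc_subset_Icc_right hr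
  rw [pow_injOn_Icc_orderOf g (hr' hst.1) (hr' hst'.1) hs.symm,
    pow_injOn_Icc_orderOf h hst.2 hst'.2 heq]

theorem pow_orderOf_pow_pow_eq_one [Monoid G] {α : G} (hα : IsOfFinOrder α) {x₁ x₂ m : ℕ}
    (h : Nat.gcd x₂ (orderOf α) ∣ x₁ * m) : ((α ^ x₁) ^ orderOf (α ^ x₂)) ^ m = 1 := by
  rw [← pow_mul, ← pow_mul, ← orderOf_dvd_iff_pow_eq_one, hα.orderOf_pow, Nat.gcd_comm]
  calc orderOf α = orderOf α / Nat.gcd x₂ (orderOf α) * Nat.gcd x₂ (orderOf α) :=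
        (Nat.div_mul_cancel (Nat.gcd_dvd_right _ _)).symm
    _ ∣ orderOf α / Nat.gcd x₂ (orderOf α) * (x₁ * m) := mul_dvd_mul_left _ h
    _ = x₁ * (orderOf α / Nat.gcd x₂ (orderOf α) * m) := by ring

end Group

theorem injOn_pow_mul_pow_of_orderOf_dvd_lcm {K : Type*} [GroupWithZero K] {α : K} (hα : α ≠ 0)
    {x₁ x₂ : ℕ} (hx₁ : x₁ ≠ 0) (hx₂ : x₂ ≠ 0) (h : orderOf α ∣ Nat.lcm x₁ x₂) {r : ℕ}
    (hr : r ≤ orderOf (α ^ x₁)) :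
    Set.InjOn (fun st : ℕ × ℕ => (α ^ x₁) ^ st.1 * (α ^ x₂) ^ st.2)
      ↑(Icc 1 r ×ˢ Icc 1 (orderOf (α ^ x₂))) := by
  set u := Units.mk0 α hα
  have hu : ∀ x, (α ^ x : K) = ((u ^ x : Kˣ) : K) := fun x => by simp [u]
  simp only [hu, orderOf_units] at hr ⊢
  replace h : orderOf u ∣ Nat.lcm x₁ x₂ := by rwa [← orderOf_units]
  intro a ha b hb hab
  exact injOn_pow_mul_pow_of_disjoint (disjoint_zpowers_pow_of_orderOf_dvd_lcm hx₁ hx₂ h) hr ha hb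
    (Units.ext (by simpa using hab))

section Polynomial

variable {R : Type*} [CommRing R]

theorem X_pow_sub_C_pow_eq_prod_Icc [IsDomain R] {ζ : R} {n : ℕ} (hζ : IsPrimitiveRoot ζ n)
    (hn : 0 < n) (c : R) : X ^ n - C (c ^ n) = ∏ t ∈ Icc 1 n, (X - C (c * ζ ^ t)) := by
  rw [X_pow_sub_C_eq_prod hζ hn (α := ζ * c) (by rw [mul_pow, hζ.pow_eq_one, one_mul]),
    ← Finset.Ico_add_one_right_eq_Icc, prod_Ico_eq_prod_range, Nat.add_sub_cancel]
  refine prod_congr rfl fun t _ => ?_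
  ring_nf

theorem nodal_image_mul_pow_eq_comp [IsDomain R] [DecidableEq R] {ι : Type*} (I : Finset ι)
    (c : ι → R) {ζ : R} {n : ℕ} (hζ : IsPrimitiveRoot ζ n) (hn : 0 < n)
    (hinj : Set.InjOn (fun it : ι × ℕ => c it.1 * ζ ^ it.2) ↑(I ×ˢ Icc 1 n)) :
    nodal ((I ×ˢ Icc 1 n).image fun it => c it.1 * ζ ^ it.2) id =
      (nodal I fun i => c i ^ n).comp (X ^ n) := by
  rw [nodal, prod_image hinj, prod_product, nodal, Polynomial.prod_comp]
  refine prod_congr rfl fun i _ => ?_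
  rw [sub_comp, X_comp, C_comp, X_pow_sub_C_pow_eq_prod_Icc hζ hn]
  rfl

theorem prod_erase_sub_eq_of_nodal_eq_comp [DecidableEq R] {ι : Type*} [DecidableEq ι]
    {A : Finset R} {I : Finset ι} {β : ι → R} {n : ℕ} (h : nodal A id = (nodal I β).comp (X ^ n))
    {a : R} (ha : a ∈ A) {i : ι} (hi : i ∈ I) (hai : a ^ n = β i) :
    ∏ b ∈ A.erase a, (a - b) = n * a ^ (n - 1) * ∏ j ∈ I.erase i, (β i - β j) := by
  calc ∏ b ∈ A.erase a, (a - b) = eval a (derivative (nodal A id)) := by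
        simpa [eval_nodal] using (eval_nodal_derivative_eval_node_eq (v := id) ha).symm
    _ = eval a (derivative (X ^ n)) * eval (β i) (derivative (nodal I β)) := by
        rw [h, derivative_comp, eval_mul, eval_comp, eval_pow, eval_X, hai]
    _ = n * a ^ (n - 1) * ∏ j ∈ I.erase i, (β i - β j) := by
        rw [eval_nodal_derivative_eval_node_eq hi, eval_nodal, derivative_X_pow]
        simp

end Polynomial

section Field

variable {K : Type*} [Field K] [DecidableEq K] {ι : Type*} [DecidableEq ι] {A : Finset K}
  {I : Finset ι} {β : ι → K}

theorem prod_erase_inv_sub_eq_of_nodal_eq_comp {n : ℕ}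
    (h : nodal A id = (nodal I β).comp (X ^ n)) (hn : 0 < n)
    {a : K} (ha : a ∈ A) (ha₀ : a ≠ 0) {i : ι} (hi : i ∈ I) (hai : a ^ n = β i) :
    ∏ b ∈ A.erase a, (a - b)⁻¹ = a * (β i)⁻¹ * (n : K)⁻¹ * ∏ j ∈ I.erase i, (β i - β j)⁻¹ := by
  rw [prod_inv_distrib, prod_erase_sub_eq_of_nodal_eq_comp h ha hi hai, prod_inv_distrib, ← hai]
  obtain ⟨m, rfl⟩ := Nat.exists_eq_add_of_lt hn
  simp only [zero_add, Nat.add_sub_cancel, pow_succ, mul_inv]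
  rw [mul_comm (a ^ m)⁻¹, mul_inv_cancel_left₀ ha₀]
  ring

theorem inv_mul_prod_erase_inv_sub_mem_of_nodal_eq_comp {n : ℕ}
    (h : nodal A id = (nodal I β).comp (X ^ n)) (hn : 0 < n) {a : K} (ha : a ∈ A) (ha₀ : a ≠ 0)
    {i : ι} (hi : i ∈ I) (hai : a ^ n = β i) (S : Subfield K) (hS : ∀ j ∈ I, β j ∈ S) :
    a⁻¹ * ∏ b ∈ A.erase a, (a - b)⁻¹ ∈ S := by
  rw [prod_erase_inv_sub_eq_of_nodal_eq_comp h hn ha ha₀ hi hai, mul_assoc a, mul_assoc a,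
    inv_mul_cancel_left₀ ha₀]
  exact S.mul_mem (S.mul_mem (S.inv_mem (hS i hi)) (S.inv_mem (natCast_mem S n)))
    (S.prod_mem fun j hj => S.inv_mem (S.sub_mem (hS i hi) (hS j (mem_of_mem_erase hj))))

end Field

open scoped Classical

theorem prod_inv_sub_eq_of_union_cosets_general (p e l x1 x2 r1 : ℕ) [Fact p.Prime] (he : 0 < e)
    (α : GaloisField p e) (hα : orderOf α = p ^ e - 1)
    (hx1 : 0 < x1) (hx2 : 0 < x2)
    (hlcm : (p ^ e - 1) ∣ Nat.lcm x1 x2)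
    (hgcd : Nat.gcd x2 (p ^ e - 1) ∣ x1 * (p ^ l - 1))
    (hr1' : r1 ≤ orderOf (α ^ x1)) :
    let ξ1 : GaloisField p e := α ^ x1
    let ξ2 : GaloisField p e := α ^ x2
    let r2 : ℕ := orderOf ξ2
    let A : Finset (GaloisField p e) :=
      (Finset.Icc 1 r1 ×ˢ Finset.Icc 1 r2).image fun st => ξ1 ^ st.1 * ξ2 ^ st.2
    A.card = r1 * r2 ∧
      ∀ s ∈ Finset.Icc 1 r1, ∀ t ∈ Finset.Icc 1 r2,
        (∏ b ∈ A.erase (ξ1 ^ s * ξ2 ^ t), (ξ1 ^ s * ξ2 ^ t - b)⁻¹) =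
            ξ1 ^ s * ξ2 ^ t * (ξ1 ^ (s * r2))⁻¹ * (r2 : GaloisField p e)⁻¹ *
              ∏ s' ∈ (Finset.Icc 1 r1).erase s, (ξ1 ^ (s * r2) - ξ1 ^ (s' * r2))⁻¹ ∧
          (ξ1 ^ s * ξ2 ^ t)⁻¹ *
              (∏ b ∈ A.erase (ξ1 ^ s * ξ2 ^ t), (ξ1 ^ s * ξ2 ^ t - b)⁻¹) ≠ 0 ∧
          ((ξ1 ^ s * ξ2 ^ t)⁻¹ *
              (∏ b ∈ A.erase (ξ1 ^ s * ξ2 ^ t), (ξ1 ^ s * ξ2 ^ t - b)⁻¹)) ^ p ^ l =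
            (ξ1 ^ s * ξ2 ^ t)⁻¹ *
              (∏ b ∈ A.erase (ξ1 ^ s * ξ2 ^ t), (ξ1 ^ s * ξ2 ^ t - b)⁻¹) := by
  intro ξ1 ξ2 r2 A
  have hp : p.Prime := Fact.out
  have hfin : IsOfFinOrder α :=
    orderOf_pos_iff.mp (hα ▸ Nat.sub_pos_of_lt (Nat.one_lt_pow he.ne' hp.one_lt))
  have hα₀ : α ≠ 0 := hfin.isUnit.ne_zero
  have hinj := injOn_pow_mul_pow_of_orderOf_dvd_lcm hα₀ hx1.ne' hx2.ne' (hα ▸ hlcm) hr1'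
  have hζ : IsPrimitiveRoot ξ2 r2 := IsPrimitiveRoot.orderOf ξ2
  have hr2 : 0 < r2 := hfin.pow.orderOf_pos
  have hnodal := nodal_image_mul_pow_eq_comp (Icc 1 r1) (ξ1 ^ ·) hζ hr2 hinj
  let F := (iterateFrobenius (GaloisField p e) p l).eqLocusField (RingHom.id _)
  have hβ : ξ1 ^ r2 ∈ F := by
    rw [RingHom.mem_eqLocusField, iterateFrobenius_def, RingHom.id_apply,
      ← Nat.sub_add_cancel (Nat.one_le_pow l p hp.pos), pow_succ,
      pow_orderOf_pow_pow_eq_one hfin (hα ▸ hgcd), one_mul]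
  refine ⟨by rw [card_image_of_injOn hinj, card_product, Nat.card_Icc, Nat.card_Icc]; rfl,
    fun s hs t ht => ?_⟩
  have ha₀ : ξ1 ^ s * ξ2 ^ t ≠ 0 := mul_ne_zero (by simp [ξ1, hα₀]) (by simp [ξ2, hα₀])
  have hmem : ξ1 ^ s * ξ2 ^ t ∈ A := mem_image_of_mem _ (mem_product (p := (s, t)) |>.mpr ⟨hs, ht⟩)
  have ha : (ξ1 ^ s * ξ2 ^ t) ^ r2 = (ξ1 ^ s) ^ r2 := by
    rw [mul_pow, ← pow_mul ξ2, mul_comm t, pow_mul, hζ.pow_eq_one, one_pow, mul_one]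
  have hu := prod_erase_inv_sub_eq_of_nodal_eq_comp hnodal hr2 hmem ha₀ hs ha
  have hfixed := inv_mul_prod_erase_inv_sub_mem_of_nodal_eq_comp hnodal hr2 hmem ha₀ hs ha F
    fun j _ => by rw [pow_right_comm]; exact F.pow_mem hβ j
  rw [RingHom.mem_eqLocusField, iterateFrobenius_def] at hfixed
  simp only [← pow_mul] at hu
  exact ⟨hu, mul_ne_zero (inv_ne_zero ha₀) (prod_ne_zero_iff.mpr fun b hb =>
    inv_ne_zero (sub_ne_zero.mpr (ne_of_mem_erase hb).symm)), hfixed⟩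

/-- Lemma 6: let `q = p^e` with `l ∣ e`, `α` a primitive element of `F_q`,
`ξ₁ = α^{x₁}`, `ξ₂ = α^{x₂}`, and assume `(q-1) ∣ lcm(x₁,x₂)` and
`gcd(x₂, q-1) ∣ x₁(p^l - 1)`.  With `r₂ = ord(ξ₂)`, `1 ≤ r₁ ≤ ord(ξ₁)` and `n = r₁ r₂`,
the set `𝒜 = ⋃_{s=1}^{r₁} {ξ₁^s ξ₂^t : 1 ≤ t ≤ r₂}` consists of `n` distinct elements, and
for each `a = ξ₁^s ξ₂^t ∈ 𝒜` the quantity `u = ∏_{b ∈ 𝒜, b ≠ a} (a - b)⁻¹` equals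
`a ξ₁^{-s r₂} r₂⁻¹ ∏_{s' ≠ s} (ξ₁^{s r₂} - ξ₁^{s' r₂})⁻¹`, and `a⁻¹ u ∈ F_{p^l}^*`
(i.e. `a⁻¹ u` is nonzero and fixed by the `p^l`-power Frobenius). -/
theorem prod_inv_sub_eq_of_union_cosets (p e l x1 x2 r1 : ℕ) [Fact p.Prime] (he : 0 < e)
    (hle : l ∣ e) (α : GaloisField p e) (hα : orderOf α = p ^ e - 1)
    (hx1 : 0 < x1) (hx2 : 0 < x2)
    (hlcm : (p ^ e - 1) ∣ Nat.lcm x1 x2)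
    (hgcd : Nat.gcd x2 (p ^ e - 1) ∣ x1 * (p ^ l - 1))
    (hr1 : 1 ≤ r1) (hr1' : r1 ≤ orderOf (α ^ x1)) :
    let ξ1 : GaloisField p e := α ^ x1
    let ξ2 : GaloisField p e := α ^ x2
    let r2 : ℕ := orderOf ξ2
    let A : Finset (GaloisField p e) :=
      (Finset.Icc 1 r1 ×ˢ Finset.Icc 1 r2).image fun st => ξ1 ^ st.1 * ξ2 ^ st.2
    A.card = r1 * r2 ∧
      ∀ s ∈ Finset.Icc 1 r1, ∀ t ∈ Finset.Icc 1 r2,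
        (∏ b ∈ A.erase (ξ1 ^ s * ξ2 ^ t), (ξ1 ^ s * ξ2 ^ t - b)⁻¹) =
            ξ1 ^ s * ξ2 ^ t * (ξ1 ^ (s * r2))⁻¹ * (r2 : GaloisField p e)⁻¹ *
              ∏ s' ∈ (Finset.Icc 1 r1).erase s, (ξ1 ^ (s * r2) - ξ1 ^ (s' * r2))⁻¹ ∧
          (ξ1 ^ s * ξ2 ^ t)⁻¹ *
              (∏ b ∈ A.erase (ξ1 ^ s * ξ2 ^ t), (ξ1 ^ s * ξ2 ^ t - b)⁻¹) ≠ 0 ∧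
          ((ξ1 ^ s * ξ2 ^ t)⁻¹ *
              (∏ b ∈ A.erase (ξ1 ^ s * ξ2 ^ t), (ξ1 ^ s * ξ2 ^ t - b)⁻¹)) ^ p ^ l =
            (ξ1 ^ s * ξ2 ^ t)⁻¹ *
              (∏ b ∈ A.erase (ξ1 ^ s * ξ2 ^ t), (ξ1 ^ s * ξ2 ^ t - b)⁻¹) :=
  prod_inv_sub_eq_of_union_cosets_general p e l x1 x2 r1 he α hα hx1 hx2 hlcm hgcd hr1'
end

section
/- Let q = p^e be a prime power with l dividing e, and let x_1, x_2 be positive integers. Then the following two statements are equivalent: (1) (q−1) | lcm(x_1, x_2) and gcd(x_2, q−1) | x_1(p^l − 1); (2) (q−1) | lcm(x_1, x_2) and (q−1)/(p^l − 1) divides x_1. -/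
/-! Write `n = p ^ e - 1` and `d = p ^ l - 1`. Since `l ∣ e`, `d` divides `n`, so
`n / d ∣ x₁ ↔ n ∣ x₁ d`. Under `n ∣ lcm x₁ x₂` the conditions `gcd x₂ n ∣ x₁ d` and `n ∣ x₁ d`
agree: comparing prime exponents, where `min` distributes over `max`,
`n = gcd n (lcm x₁ x₂) = lcm (gcd n x₁) (gcd n x₂)`, and `gcd n x₁` divides `x₁ d` anyway. -/

namespace Nat

theorem dvd_lcm_gcd_gcd_of_dvd_lcm {n a b : ℕ} (h : n ∣ lcm a b) :
    n ∣ lcm (gcd n a) (gcd n b) := by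
  rcases eq_or_ne a 0 with rfl | ha
  · exact (gcd_zero_right n).symm ▸ dvd_lcm_left n _
  rcases eq_or_ne b 0 with rfl | hb
  · exact (gcd_zero_right n).symm ▸ dvd_lcm_right _ n
  have hn : n ≠ 0 := ne_zero_of_dvd_ne_zero (lcm_ne_zero ha hb) h
  rw [← factorization_le_iff_dvd hn (lcm_ne_zero ha hb), factorization_lcm ha hb] at h
  rw [← factorization_le_iff_dvd hn (lcm_ne_zero (gcd_ne_zero_left hn) (gcd_ne_zero_left hn)),
    factorization_lcm (gcd_ne_zero_left hn) (gcd_ne_zero_left hn), factorization_gcd hn ha,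
    factorization_gcd hn hb]
  intro q
  have hq := h q
  simp only [Finsupp.sup_apply, Finsupp.inf_apply] at hq ⊢
  omega

theorem gcd_dvd_iff_dvd_of_dvd_lcm {n a b c : ℕ} (h : n ∣ lcm a b) :
    gcd b n ∣ a * c ↔ n ∣ a * c := by
  refine ⟨fun hb => (dvd_lcm_gcd_gcd_of_dvd_lcm h).trans (lcm_dvd ?_ ?_),
    (gcd_dvd_right b n).trans⟩
  · exact (gcd_dvd_right n a).trans (dvd_mul_right a c)
  · rwa [gcd_comm]

end Nat

theorem dvd_lcm_and_gcd_dvd_iff_general (p e l : ℕ) [Fact p.Prime] (he : 0 < e) (hle : l ∣ e)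
    (x1 x2 : ℕ) :
    ((p ^ e - 1) ∣ Nat.lcm x1 x2 ∧ Nat.gcd x2 (p ^ e - 1) ∣ x1 * (p ^ l - 1)) ↔
      ((p ^ e - 1) ∣ Nat.lcm x1 x2 ∧ (p ^ e - 1) / (p ^ l - 1) ∣ x1) := by
  have hd : p ^ l - 1 ∣ p ^ e - 1 := Nat.pow_sub_one_dvd_pow_sub_one p hle
  have hl : l ≠ 0 := (Nat.pos_of_dvd_of_pos hle he).ne'
  have hd0 : 0 < p ^ l - 1 := Nat.sub_pos_of_lt (Nat.one_lt_pow hl (Fact.out : p.Prime).one_lt)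
  rw [Nat.div_dvd_iff_dvd_mul hd hd0, Nat.mul_comm (p ^ l - 1)]
  exact and_congr_right Nat.gcd_dvd_iff_dvd_of_dvd_lcm

/-- Lemma 7: for `q = p^e` with `l ∣ e` and positive integers `x₁, x₂`,
the conditions `(q-1) ∣ lcm(x₁,x₂) ∧ gcd(x₂, q-1) ∣ x₁(p^l - 1)` and
`(q-1) ∣ lcm(x₁,x₂) ∧ (q-1)/(p^l - 1) ∣ x₁` are equivalent. -/
theorem dvd_lcm_and_gcd_dvd_iff (p e l : ℕ) [Fact p.Prime] (he : 0 < e) (hle : l ∣ e)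
    (x1 x2 : ℕ) (hx1 : 0 < x1) (hx2 : 0 < x2) :
    ((p ^ e - 1) ∣ Nat.lcm x1 x2 ∧ Nat.gcd x2 (p ^ e - 1) ∣ x1 * (p ^ l - 1)) ↔
      ((p ^ e - 1) ∣ Nat.lcm x1 x2 ∧ (p ^ e - 1) / (p ^ l - 1) ∣ x1) :=
  dvd_lcm_and_gcd_dvd_iff_general p e l he hle x1 x2
end

section
/- Let q = p^e be a prime power with l | e, set y = (q−1)/(p^l − 1), and let m | (q−1) with m = m_1 m_2 where m_1 = m/gcd(m,y) and m_2 = gcd(m,y). Let α be a primitive element of F_q, let ϑ_1 = α^{(q−1)/m} and ϑ_2 = α^{y/m_2}, let H = ⟨ϑ_1⟩ (of order m) and G = ⟨ϑ_2⟩ (of order (p^l−1)m_2), so H is a subgroup of G; let η_1,…,η_{(p^l−1)/m_1} be coset representatives of G/H. Let n = rm with 1 ≤ r ≤ (p^l−1)/m_1 and let {a_1,…,a_n} = ∪_{i=1}^{r} η_i H (these are distinct). If a_i ∈ η_s H, so a_i = η_s ϑ_1^t for some 1 ≤ t ≤ m, then u_i := Π_{1≤j≤n, j≠i} (a_i − a_j)^{−1}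 satisfies u_i = a_i · η_s^{−m} · m^{−1} · Π_{1≤s'≤r, s'≠s} (η_s^m − η_{s'}^m)^{−1}, and moreover a_i^{−1} u_i ∈ F_{p^l}^*. -/
open Finset
open scoped Classical

/-!
The set `A = ⋃ₛ ηₛ H` is the zero set of `f = ∏ₛ (X ^ m - ηₛ ^ m)`, so for `a ∈ A` the product
`∏_{b ∈ A, b ≠ a} (a - b)` is `f'(a)`. Every term of the product rule except the one of the
coset of `a` vanishes at `a`, which leaves `m a ^ (m - 1) ∏_{s' ≠ s} (ηₛ ^ m - η_{s'} ^ m)`.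
Moreover `G ^ m` is killed by `p ^ l - 1`, so each `ηₛ ^ m`, and with it `a⁻¹ u`, is fixed by
`x ↦ x ^ p ^ l`.
-/

lemma prod_Icc_one_eq_prod_range {M : Type*} [CommMonoid M] {m : ℕ} (g : ℕ → M)
    (h : g m = g 0) : ∏ t ∈ Icc 1 m, g t = ∏ t ∈ range m, g t := by
  cases m with
  | zero => simp
  | succ n =>
    rw [prod_Icc_succ_top (by omega), h, prod_range_succ', ← Ico_add_one_right_eq_Icc,
      prod_Ico_eq_prod_range, Nat.add_sub_cancel]
    simp only [add_comm 1]

lemma pow_div_gcd_pow_mul_eq_one {M : Type*} [Monoid M] {α : M} {y d : ℕ} (m : ℕ)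
    (h : α ^ (y * d) = 1) : (α ^ (y / Nat.gcd m y)) ^ (m * d) = 1 := by
  set g := Nat.gcd m y
  obtain ⟨k, hk⟩ : g ∣ m := Nat.gcd_dvd_left m y
  have hexp : y / g * (m * d) = y * d * k :=
    calc y / g * (m * d) = y / g * g * k * d := by rw [hk]; ring
      _ = y * d * k := by rw [Nat.div_mul_cancel (Nat.gcd_dvd_right m y)]; ring
  rw [← pow_mul, hexp, pow_mul, h, one_pow]

lemma pow_pow_succ_eq_self_of_mem_powers {M : Type*} [Monoid M] {g x : M} {m n : ℕ}
    (hg : g ^ (m * n) = 1) (hx : x ∈ Submonoid.powers g) : (x ^ m) ^ (n + 1) = x ^ m := by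
  obtain ⟨k, rfl⟩ := (Submonoid.mem_powers_iff _ _).1 hx
  rw [pow_succ, ← pow_mul, ← pow_mul, mul_comm k, pow_mul, hg, one_pow, one_mul]

section Polynomials

open Polynomial

lemma Polynomial.eval_derivative_prod_of_eval_eq_zero {R ι : Type*} [CommSemiring R]
    [DecidableEq ι] {s : Finset ι} {f : ι → R[X]} {i : ι} (hi : i ∈ s) {x : R}
    (hx : (f i).eval x = 0) :
    (derivative (∏ j ∈ s, f j)).eval x =
      (∏ j ∈ s.erase i, f j).eval x * (derivative (f i)).eval x := by
  rw [derivative_prod_finset, eval_finsetSum, ← add_sum_erase _ _ hi, eval_mul,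
    sum_eq_zero fun j hj => ?_, add_zero]
  rw [eval_mul, eval_prod, prod_eq_zero (mem_erase.2 ⟨(mem_erase.1 hj).1.symm, hi⟩) hx, zero_mul]

lemma IsPrimitiveRoot.prod_Icc_X_sub_C_mul_pow {K : Type*} [Field K] {ζ : K} {m : ℕ}
    (hζ : IsPrimitiveRoot ζ m) (hm : 0 < m) (c : K) :
    ∏ t ∈ Icc 1 m, (X - C (c * ζ ^ t)) = X ^ m - C (c ^ m) := by
  rw [prod_Icc_one_eq_prod_range _ (by simp [hζ.pow_eq_one]), X_pow_sub_C_eq_prod hζ hm rfl]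
  simp only [mul_comm c]

variable {K ι : Type*} [Field K] {S : Finset ι} {c : ι → K} {ζ : K} {m : ℕ}

def cosetUnion [DecidableEq K] (S : Finset ι) (c : ι → K) (ζ : K) (m : ℕ) : Finset K :=
  (S ×ˢ Icc 1 m).image fun st => c st.1 * ζ ^ st.2

lemma injOn_mul_pow_of_distinct_cosets (hζ : IsPrimitiveRoot ζ m) (hc : ∀ i ∈ S, c i ≠ 0)
    (hS : ∀ i ∈ S, ∀ j ∈ S, i ≠ j → ∀ t : ℕ, c i ≠ c j * ζ ^ t) :
    Set.InjOn (fun st : ι × ℕ => c st.1 * ζ ^ st.2) ↑(S ×ˢ Icc 1 m) := by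
  rintro ⟨i, t⟩ hit ⟨j, t'⟩ hjt' h
  simp only [coe_product, Set.mem_prod, mem_coe, mem_Icc] at hit hjt' h
  obtain rfl : i = j := by
    by_contra hij
    refine hS i hit.1 j hjt'.1 hij (t' + (m - t)) ?_
    calc c i = c i * ζ ^ (t + (m - t)) := by
          rw [Nat.add_sub_cancel' hit.2.2, hζ.pow_eq_one, mul_one]
      _ = c j * ζ ^ (t' + (m - t)) := by rw [pow_add, pow_add, ← mul_assoc, ← mul_assoc, h]
  have hpow : ζ ^ (t - 1) * ζ = ζ ^ (t' - 1) * ζ := by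
    rw [← pow_succ, ← pow_succ, Nat.sub_add_cancel hit.2.1, Nat.sub_add_cancel hjt'.2.1]
    exact mul_left_cancel₀ (hc i hit.1) h
  have := hζ.pow_inj (by omega) (by omega) (mul_right_cancel₀ (hζ.ne_zero (by omega)) hpow)
  obtain rfl : t = t' := by omega
  rfl

lemma card_cosetUnion [DecidableEq K] (hζ : IsPrimitiveRoot ζ m) (hc : ∀ i ∈ S, c i ≠ 0)
    (hS : ∀ i ∈ S, ∀ j ∈ S, i ≠ j → ∀ t : ℕ, c i ≠ c j * ζ ^ t) :
    (cosetUnion S c ζ m).card = S.card * m := by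
  rw [cosetUnion, card_image_of_injOn (injOn_mul_pow_of_distinct_cosets hζ hc hS), card_product,
    Nat.card_Icc, Nat.add_sub_cancel]

lemma prod_X_sub_C_cosetUnion [DecidableEq K] (hζ : IsPrimitiveRoot ζ m) (hm : 0 < m)
    (hc : ∀ i ∈ S, c i ≠ 0) (hS : ∀ i ∈ S, ∀ j ∈ S, i ≠ j → ∀ t : ℕ, c i ≠ c j * ζ ^ t) :
    ∏ b ∈ cosetUnion S c ζ m, (X - C b) = ∏ i ∈ S, (X ^ m - C (c i ^ m)) := by
  rw [cosetUnion, prod_image (injOn_mul_pow_of_distinct_cosets hζ hc hS), prod_product]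
  exact prod_congr rfl fun i _ => hζ.prod_Icc_X_sub_C_mul_pow hm (c i)

lemma prod_erase_sub_cosetUnion [DecidableEq K] [DecidableEq ι] (hζ : IsPrimitiveRoot ζ m)
    (hm : 0 < m) (hc : ∀ i ∈ S, c i ≠ 0)
    (hS : ∀ i ∈ S, ∀ j ∈ S, i ≠ j → ∀ t : ℕ, c i ≠ c j * ζ ^ t)
    {i : ι} (hi : i ∈ S) {t : ℕ} (ht : t ∈ Icc 1 m) :
    ∏ b ∈ (cosetUnion S c ζ m).erase (c i * ζ ^ t), (c i * ζ ^ t - b) =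
      m * (c i * ζ ^ t) ^ (m - 1) * ∏ j ∈ S.erase i, (c i ^ m - c j ^ m) := by
  set a := c i * ζ ^ t
  have ha : a ^ m = c i ^ m := by
    rw [mul_pow, ← pow_mul, mul_comm t, pow_mul, hζ.pow_eq_one, one_pow, mul_one]
  have hA : a ∈ cosetUnion S c ζ m := mem_image_of_mem _ (mk_mem_product hi ht)
  have h := Lagrange.eval_nodal_derivative_eval_node_eq (v := id) hA
  simp only [Lagrange.nodal_eq, id_eq] at h
  rw [prod_X_sub_C_cosetUnion hζ hm hc hS,
    eval_derivative_prod_of_eval_eq_zero hi (by simp [ha])] at h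
  simp only [eval_prod, eval_mul, eval_sub, eval_pow, eval_X, eval_C,
    derivative_sub, derivative_X_pow, derivative_C, sub_zero, ha] at h
  rw [← h, mul_comm]

lemma prod_inv_sub_cosetUnion [DecidableEq K] [DecidableEq ι] (hζ : IsPrimitiveRoot ζ m)
    (hm : 0 < m) (hc : ∀ i ∈ S, c i ≠ 0)
    (hS : ∀ i ∈ S, ∀ j ∈ S, i ≠ j → ∀ t : ℕ, c i ≠ c j * ζ ^ t)
    {i : ι} (hi : i ∈ S) {t : ℕ} (ht : t ∈ Icc 1 m) :
    ∏ b ∈ (cosetUnion S c ζ m).erase (c i * ζ ^ t), (c i * ζ ^ t - b)⁻¹ =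
      c i * ζ ^ t * (c i ^ m)⁻¹ * (m : K)⁻¹ * ∏ j ∈ S.erase i, (c i ^ m - c j ^ m)⁻¹ := by
  have ha : (c i * ζ ^ t) ^ m = c i ^ m := by
    rw [mul_pow, ← pow_mul, mul_comm t, pow_mul, hζ.pow_eq_one, one_pow, mul_one]
  have ha0 : c i * ζ ^ t ≠ 0 := mul_ne_zero (hc i hi) (pow_ne_zero _ (hζ.ne_zero hm.ne'))
  have hinv : c i * ζ ^ t * (c i ^ m)⁻¹ = ((c i * ζ ^ t) ^ (m - 1))⁻¹ := by
    rw [← ha, ← mul_pow_sub_one hm.ne', mul_inv, mul_inv_cancel_left₀ ha0]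
  rw [prod_inv_distrib, prod_erase_sub_cosetUnion hζ hm hc hS hi ht, prod_inv_distrib, hinv,
    mul_inv, mul_inv]
  ring

end Polynomials

theorem prod_inv_sub_eq_of_coset_reps_general (p e l m r : ℕ) [Fact p.Prime] (he : 0 < e)
    (hle : l ∣ e) (hm : m ∣ p ^ e - 1)
    (α : GaloisField p e) (hα : orderOf α = p ^ e - 1)
    (ϑ1 ϑ2 : GaloisField p e)
    (hϑ1 : ϑ1 = α ^ ((p ^ e - 1) / m))
    (hϑ2 : ϑ2 = α ^ (((p ^ e - 1) / (p ^ l - 1)) /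
      Nat.gcd m ((p ^ e - 1) / (p ^ l - 1))))
    (η : ℕ → GaloisField p e)
    (hη : ∀ i ∈ Finset.Icc 1 r, η i ∈ Submonoid.powers ϑ2)
    (hcosets : ∀ i ∈ Finset.Icc 1 r, ∀ j ∈ Finset.Icc 1 r, i ≠ j →
      ∀ t : ℕ, η i ≠ η j * ϑ1 ^ t) :
    let A : Finset (GaloisField p e) :=
      (Finset.Icc 1 r ×ˢ Finset.Icc 1 m).image fun st => η st.1 * ϑ1 ^ st.2
    A.card = r * m ∧
      ∀ s ∈ Finset.Icc 1 r, ∀ t ∈ Finset.Icc 1 m,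
        (∏ b ∈ A.erase (η s * ϑ1 ^ t), (η s * ϑ1 ^ t - b)⁻¹) =
            η s * ϑ1 ^ t * (η s ^ m)⁻¹ * (m : GaloisField p e)⁻¹ *
              ∏ s' ∈ (Finset.Icc 1 r).erase s, (η s ^ m - η s' ^ m)⁻¹ ∧
          (η s * ϑ1 ^ t)⁻¹ *
              (∏ b ∈ A.erase (η s * ϑ1 ^ t), (η s * ϑ1 ^ t - b)⁻¹) ≠ 0 ∧
          ((η s * ϑ1 ^ t)⁻¹ *
              (∏ b ∈ A.erase (η s * ϑ1 ^ t), (η s * ϑ1 ^ t - b)⁻¹)) ^ p ^ l =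
            (η s * ϑ1 ^ t)⁻¹ *
              (∏ b ∈ A.erase (η s * ϑ1 ^ t), (η s * ϑ1 ^ t - b)⁻¹) := by
  have hq : 0 < p ^ e - 1 := Nat.sub_pos_of_lt (Nat.one_lt_pow he.ne' (Fact.out : p.Prime).one_lt)
  have hm0 : 0 < m := Nat.pos_of_dvd_of_pos hm hq
  have hαprim : IsPrimitiveRoot α (p ^ e - 1) := hα ▸ IsPrimitiveRoot.orderOf α
  have hϑ1 : IsPrimitiveRoot ϑ1 m := hϑ1 ▸ hαprim.pow hq (Nat.div_mul_cancel hm).symm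
  have hη0 : ∀ i ∈ Icc 1 r, η i ≠ 0 := fun i hi => by
    obtain ⟨k, hk⟩ := hη i hi
    rw [← hk, hϑ2]
    exact pow_ne_zero _ (pow_ne_zero _ (hαprim.ne_zero hq.ne'))
  have hfix : ∀ i ∈ Icc 1 r, iterateFrobenius _ p l (η i ^ m) = η i ^ m := fun i hi => by
    have hϑ2 : ϑ2 ^ (m * (p ^ l - 1)) = 1 := hϑ2 ▸ pow_div_gcd_pow_mul_eq_one m (by
      rw [Nat.div_mul_cancel (Nat.pow_sub_one_dvd_pow_sub_one p hle), ← hα, pow_orderOf_eq_one])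
    rw [iterateFrobenius_def, ← Nat.sub_add_cancel (Nat.one_le_pow l p (Fact.out : p.Prime).pos)]
    exact pow_pow_succ_eq_self_of_mem_powers hϑ2 (hη i hi)
  intro A
  have hA : A = cosetUnion (Icc 1 r) η ϑ1 m := rfl
  refine ⟨by rw [hA, card_cosetUnion hϑ1 hη0 hcosets, Nat.card_Icc, Nat.add_sub_cancel],
    fun s hs t ht => ?_⟩
  have hu := prod_inv_sub_cosetUnion hϑ1 hm0 hη0 hcosets hs ht
  rw [← hA] at hu
  have ha0 : η s * ϑ1 ^ t ≠ 0 := mul_ne_zero (hη0 s hs) (pow_ne_zero _ (hϑ1.ne_zero hm0.ne'))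
  have hw : (η s * ϑ1 ^ t)⁻¹ * ∏ b ∈ A.erase (η s * ϑ1 ^ t), (η s * ϑ1 ^ t - b)⁻¹ =
      (η s ^ m)⁻¹ * (m : GaloisField p e)⁻¹ * ∏ j ∈ (Icc 1 r).erase s, (η s ^ m - η j ^ m)⁻¹ := by
    rw [hu, mul_assoc, mul_assoc, inv_mul_cancel_left₀ ha0, ← mul_assoc]
  refine ⟨hu, mul_ne_zero (inv_ne_zero ha0) (prod_ne_zero_iff.2 fun b hb =>
    inv_ne_zero (sub_ne_zero.2 (ne_of_mem_erase hb).symm)), ?_⟩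
  rw [hw, ← iterateFrobenius_def, map_mul, map_mul, map_inv₀, map_inv₀, map_natCast, map_prod,
    hfix s hs]
  refine congrArg _ (prod_congr rfl fun j hj => ?_)
  rw [map_inv₀, map_sub, hfix s hs, hfix j (mem_of_mem_erase hj)]

/-- Lemma 8: let `q = p^e` with `l ∣ e`, set `y = (q-1)/(p^l-1)`, let
`m ∣ q-1` with `m = m₁ m₂`, `m₂ = gcd(m, y)`, `m₁ = m/m₂`.  Let `α` be a primitive element
of `F_q`, `ϑ₁ = α^{(q-1)/m}` generating `H = ⟨ϑ₁⟩` of order `m`, and `ϑ₂ = α^{y/m₂}`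
generating `G = ⟨ϑ₂⟩ ⊇ H`.  Let `η₁, η₂, …` be representatives of distinct cosets of `H`
in `G`, and let `𝒜 = ⋃_{s=1}^{r} η_s H` with `1 ≤ r ≤ (p^l-1)/m₁`, a set of `n = r m`
distinct elements.  Then for each `a = η_s ϑ₁^t ∈ 𝒜` the quantity
`u = ∏_{b ∈ 𝒜, b ≠ a} (a - b)⁻¹` equals
`a η_s^{-m} m⁻¹ ∏_{s' ≠ s} (η_s^m - η_{s'}^m)⁻¹`, and `a⁻¹ u ∈ F_{p^l}^*`
(i.e. `a⁻¹ u` is nonzero and fixed by the `p^l`-power Frobenius). -/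
theorem prod_inv_sub_eq_of_coset_reps (p e l m r : ℕ) [Fact p.Prime] (he : 0 < e)
    (hle : l ∣ e) (hm : m ∣ p ^ e - 1)
    (α : GaloisField p e) (hα : orderOf α = p ^ e - 1)
    (ϑ1 ϑ2 : GaloisField p e)
    (hϑ1 : ϑ1 = α ^ ((p ^ e - 1) / m))
    (hϑ2 : ϑ2 = α ^ (((p ^ e - 1) / (p ^ l - 1)) /
      Nat.gcd m ((p ^ e - 1) / (p ^ l - 1))))
    (hr1 : 1 ≤ r)
    (hr2 : r ≤ (p ^ l - 1) / (m / Nat.gcd m ((p ^ e - 1) / (p ^ l - 1))))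
    (η : ℕ → GaloisField p e)
    (hη : ∀ i ∈ Finset.Icc 1 r, η i ∈ Submonoid.powers ϑ2)
    (hcosets : ∀ i ∈ Finset.Icc 1 r, ∀ j ∈ Finset.Icc 1 r, i ≠ j →
      ∀ t : ℕ, η i ≠ η j * ϑ1 ^ t) :
    let A : Finset (GaloisField p e) :=
      (Finset.Icc 1 r ×ˢ Finset.Icc 1 m).image fun st => η st.1 * ϑ1 ^ st.2
    A.card = r * m ∧
      ∀ s ∈ Finset.Icc 1 r, ∀ t ∈ Finset.Icc 1 m,
        (∏ b ∈ A.erase (η s * ϑ1 ^ t), (η s * ϑ1 ^ t - b)⁻¹) =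
            η s * ϑ1 ^ t * (η s ^ m)⁻¹ * (m : GaloisField p e)⁻¹ *
              ∏ s' ∈ (Finset.Icc 1 r).erase s, (η s ^ m - η s' ^ m)⁻¹ ∧
          (η s * ϑ1 ^ t)⁻¹ *
              (∏ b ∈ A.erase (η s * ϑ1 ^ t), (η s * ϑ1 ^ t - b)⁻¹) ≠ 0 ∧
          ((η s * ϑ1 ^ t)⁻¹ *
              (∏ b ∈ A.erase (η s * ϑ1 ^ t), (η s * ϑ1 ^ t - b)⁻¹)) ^ p ^ l =
            (η s * ϑ1 ^ t)⁻¹ *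
              (∏ b ∈ A.erase (η s * ϑ1 ^ t), (η s * ϑ1 ^ t - b)⁻¹) :=
  prod_inv_sub_eq_of_coset_reps_general p e l m r he hle hm α hα ϑ1 ϑ2 hϑ1 hϑ2 η hη hcosets
end

section
/- Let q = p^e be a prime power with l | e. Let α be a primitive element of F_q, ξ_1 = α^{x_1}, ξ_2 = α^{x_2}, and assume (q−1) | lcm(x_1, x_2) and gcd(x_2, q−1) | x_1(p^l − 1). Let n = r_1 r_2 where 1 ≤ r_1 ≤ ord(ξ_1) and r_2 = ord(ξ_2), and let {a_1,…,a_n} = ∪_{i=1}^{r_1} {ξ_1^i ξ_2^j : j = 1,…,r_2}. Then Π_{j=1}^{n} (0 − a_j)^{−1} = (−1)^n ξ_1^{−r_1(r_1+1)r_2/2} ξ_2^{−r_2(r_2+1)r_1/2}, and this element lies in F_{p^l}^*. -/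
/-!
The map `(s, t) ↦ ξ₁^s ξ₂^t` is injective on `[1, r₁] × [1, r₂]` because `⟨ξ₁⟩ ∩ ⟨ξ₂⟩ = 1`:
with `gᵢ = gcd(xᵢ, q - 1)`, the hypothesis `(q - 1) ∣ lcm(x₁, x₂)` gives `lcm(g₁, g₂) = q - 1`.
So the product is `(-1)^n` times the inverses of `(ξ₁^{r₂})^{r₁(r₁+1)/2}` and
`(ξ₂^{r₂(r₂+1)/2})^{r₁}`, and both bases lie in the subfield fixed by `x ↦ x^{p^l}`:
`(ξ₁^{r₂})^{p^l-1} = 1` since `g₂ r₂ = q - 1` and `g₂ ∣ x₁(p^l - 1)`, while `ξ₂^{r₂(r₂+1)/2}`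
squares to `ξ₂^{r₂(r₂+1)} = 1`, hence is `±1`.
-/

open Finset
open scoped Classical

theorem Nat.lcm_gcd_gcd_eq_gcd_lcm (a b n : ℕ) :
    Nat.lcm (Nat.gcd a n) (Nat.gcd b n) = Nat.gcd (Nat.lcm a b) n := by
  rcases eq_or_ne a 0 with rfl | ha
  · simpa using Nat.dvd_antisymm (Nat.lcm_dvd dvd_rfl (Nat.gcd_dvd_right b n))
      (Nat.dvd_lcm_left _ _)
  rcases eq_or_ne b 0 with rfl | hb
  · simpa using Nat.dvd_antisymm (Nat.lcm_dvd (Nat.gcd_dvd_right a n) dvd_rfl)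
      (Nat.dvd_lcm_right _ _)
  rcases eq_or_ne n 0 with rfl | hn
  · simp
  refine Nat.eq_of_factorization_eq (Nat.lcm_ne_zero (Nat.gcd_ne_zero_right hn)
    (Nat.gcd_ne_zero_right hn)) (Nat.gcd_ne_zero_right hn) fun q => ?_
  simp only [Nat.factorization_lcm (Nat.gcd_ne_zero_right hn) (Nat.gcd_ne_zero_right hn),
    Nat.factorization_gcd ha hn, Nat.factorization_gcd hb hn,
    Nat.factorization_gcd (Nat.lcm_ne_zero ha hb) hn, Nat.factorization_lcm ha hb,
    Finsupp.sup_apply, Finsupp.inf_apply]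
  omega

theorem disjoint_zpowers_pow_pow {G : Type*} [Group G] {a : G} {x y : ℕ}
    (h : orderOf a ∣ Nat.lcm x y) :
    Disjoint (Subgroup.zpowers (a ^ x)) (Subgroup.zpowers (a ^ y)) := by
  rw [Subgroup.disjoint_def]
  intro g hgx hgy
  obtain ⟨i, rfl⟩ := Subgroup.mem_zpowers_iff.mp hgx
  obtain ⟨j, hj⟩ := Subgroup.mem_zpowers_iff.mp hgy
  simp only [← zpow_natCast, ← zpow_mul] at hj ⊢
  have hdiff : (orderOf a : ℤ) ∣ x * i - y * j := (zpow_eq_zpow_iff_modEq.mp hj).dvd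
  have hx : ((Nat.gcd x (orderOf a) : ℕ) : ℤ) ∣ x * i :=
    (Int.natCast_dvd_natCast.mpr (Nat.gcd_dvd_left _ _)).mul_right _
  have hy : ((Nat.gcd y (orderOf a) : ℕ) : ℤ) ∣ x * i := by
    have h1 : ((Nat.gcd y (orderOf a) : ℕ) : ℤ) ∣ y * j :=
      (Int.natCast_dvd_natCast.mpr (Nat.gcd_dvd_left _ _)).mul_right _
    have h2 := (Int.natCast_dvd_natCast.mpr (Nat.gcd_dvd_right y (orderOf a))).trans hdiff
    simpa using dvd_add h2 h1
  rw [← orderOf_dvd_iff_zpow_eq_one, ← Nat.gcd_eq_right h, ← Nat.lcm_gcd_gcd_eq_gcd_lcm,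
    Int.natCast_dvd]
  rw [Int.natCast_dvd] at hx hy
  exact Nat.lcm_dvd hx hy

theorem pow_injOn_Icc_orderOf_s17 {G : Type*} [Group G] (a : G) :
    Set.InjOn (a ^ ·) (Set.Icc 1 (orderOf a)) := by
  intro s hs t ht hst
  obtain ⟨hs1, hs2⟩ := hs
  obtain ⟨ht1, ht2⟩ := ht
  have hpred : a ^ (s - 1) = a ^ (t - 1) := mul_right_cancel (b := a) <| by
    rwa [pow_sub_one_mul (by omega), pow_sub_one_mul (by omega)]
  have := pow_injOn_Iio_orderOf (x := a) (show s - 1 < orderOf a by omega)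
    (show t - 1 < orderOf a by omega) hpred
  omega

theorem injOn_pow_mul_pow {G : Type*} [CommGroup G] {a b : G}
    (hab : Disjoint (Subgroup.zpowers a) (Subgroup.zpowers b)) {m k : ℕ}
    (hm : m ≤ orderOf a) (hk : k ≤ orderOf b) :
    Set.InjOn (fun st : ℕ × ℕ => a ^ st.1 * b ^ st.2) (Set.Icc 1 m ×ˢ Set.Icc 1 k) := by
  rintro ⟨s, t⟩ ⟨hs, ht⟩ ⟨s', t'⟩ ⟨hs', ht'⟩ h
  obtain ⟨ha, hb⟩ := Subgroup.disjoint_iff_mul_eq_one.mp hab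
    (div_mem (Subgroup.npow_mem_zpowers a s) (Subgroup.npow_mem_zpowers a s'))
    (div_mem (Subgroup.npow_mem_zpowers b t) (Subgroup.npow_mem_zpowers b t'))
    (by rw [div_mul_div_comm, div_eq_one]; exact h)
  simp only [Set.mem_Icc] at hs ht hs' ht'
  exact Prod.ext
    (pow_injOn_Icc_orderOf_s17 a ⟨hs.1, hs.2.trans hm⟩ ⟨hs'.1, hs'.2.trans hm⟩ (div_eq_one.mp ha))
    (pow_injOn_Icc_orderOf_s17 b ⟨ht.1, ht.2.trans hk⟩ ⟨ht'.1, ht'.2.trans hk⟩ (div_eq_one.mp hb))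

theorem IsOfFinOrder.injOn_pow_pow_mul_pow_pow {M : Type*} [CommMonoid M] {a : M}
    (ha : IsOfFinOrder a) {x y m : ℕ} (h : orderOf a ∣ Nat.lcm x y) (hm : m ≤ orderOf (a ^ x)) :
    Set.InjOn (fun st : ℕ × ℕ => (a ^ x) ^ st.1 * (a ^ y) ^ st.2)
      (Set.Icc 1 m ×ˢ Set.Icc 1 (orderOf (a ^ y))) := by
  obtain ⟨u, rfl⟩ := ha.isUnit
  simp only [← Units.val_pow_eq_pow_val, orderOf_units] at hm h ⊢
  have hu := injOn_pow_mul_pow (disjoint_zpowers_pow_pow h) hm le_rfl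
  exact fun st hst st' hst' hst_eq => hu hst hst' (Units.val_injective (by simpa using hst_eq))

theorem sum_Icc_id_mul_two (m : ℕ) : (∑ i ∈ Icc 1 m, i) * 2 = m * (m + 1) := by
  induction m with
  | zero => simp
  | succ k ih =>
    rw [sum_Icc_succ_top (by omega), add_mul, ih]
    ring

theorem prod_Icc_product_pow_mul_pow {M : Type*} [CommMonoid M] (a b : M) (m k : ℕ) :
    ∏ st ∈ Icc 1 m ×ˢ Icc 1 k, a ^ st.1 * b ^ st.2 =
      a ^ (m * (m + 1) * k / 2) * b ^ (k * (k + 1) * m / 2) := by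
  have hsum (m k : ℕ) : (∑ i ∈ Icc 1 m, i) * k = m * (m + 1) * k / 2 := by
    rw [← sum_Icc_id_mul_two, mul_right_comm, Nat.mul_div_cancel _ two_pos]
  rw [prod_mul_distrib, prod_pow_eq_pow_sum, prod_pow_eq_pow_sum, sum_product, sum_product_right,
    ← hsum, ← hsum]
  simp [mul_sum, mul_comm]

theorem prod_Icc_product_inv_zero_sub_pow_mul_pow {K : Type*} [Field K] (a b : K) (m k : ℕ) :
    ∏ st ∈ Icc 1 m ×ˢ Icc 1 k, (0 - a ^ st.1 * b ^ st.2)⁻¹ =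
      (-1) ^ (m * k) * (a ^ (m * (m + 1) * k / 2))⁻¹ * (b ^ (k * (k + 1) * m / 2))⁻¹ := by
  simp only [zero_sub, inv_neg]
  rw [prod_neg, prod_inv_distrib, prod_Icc_product_pow_mul_pow, card_product, Nat.card_Icc,
    Nat.card_Icc, Nat.add_sub_cancel, Nat.add_sub_cancel, mul_inv, ← mul_assoc]

theorem pow_pow_orderOf_pow_eq_one_of_gcd_dvd {M : Type*} [Monoid M] {a : M} {x m : ℕ}
    (h : Nat.gcd x (orderOf a) ∣ m) : (a ^ m) ^ orderOf (a ^ x) = 1 := by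
  rw [← pow_mul, ← orderOf_dvd_iff_pow_eq_one]
  rcases eq_or_ne x 0 with rfl | hx
  · simpa using h
  rw [orderOf_pow' a hx, Nat.gcd_comm]
  nth_rw 1 [← Nat.mul_div_cancel' (Nat.gcd_dvd_right x (orderOf a))]
  exact Nat.mul_dvd_mul h dvd_rfl

theorem pow_orderOf_mul_succ_div_two_sq_eq_one {M : Type*} [Monoid M] (g : M) :
    (g ^ (orderOf g * (orderOf g + 1) / 2)) ^ 2 = 1 := by
  rw [← pow_mul, Nat.div_mul_cancel (Nat.even_mul_succ_self _).two_dvd, pow_mul,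
    pow_orderOf_eq_one, one_pow]

theorem mem_of_sq_eq_one {R S : Type*} [Ring R] [NoZeroDivisors R] [SetLike S R]
    [SubringClass S R] (s : S) {y : R} (hy : y ^ 2 = 1) : y ∈ s := by
  rcases mul_self_eq_one_iff.mp (sq y ▸ hy) with rfl | rfl
  · exact one_mem s
  · exact neg_mem (one_mem s)

theorem mem_eqLocusField_iterateFrobenius {K : Type*} [Field K] {p : ℕ} [ExpChar K p] {l : ℕ}
    {x : K} : x ∈ (iterateFrobenius K p l).eqLocusField (RingHom.id K) ↔ x ^ p ^ l = x := by
  simp [iterateFrobenius_def]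

theorem prod_inv_neg_eq_of_union_cosets_general (p e l x1 x2 r1 : ℕ) [Fact p.Prime] (he : 0 < e)
    (α : GaloisField p e) (hα : orderOf α = p ^ e - 1)
    (hlcm : (p ^ e - 1) ∣ Nat.lcm x1 x2)
    (hgcd : Nat.gcd x2 (p ^ e - 1) ∣ x1 * (p ^ l - 1))
    (hr1' : r1 ≤ orderOf (α ^ x1)) :
    let ξ1 : GaloisField p e := α ^ x1
    let ξ2 : GaloisField p e := α ^ x2
    let r2 : ℕ := orderOf ξ2
    let n : ℕ := r1 * r2
    let A : Finset (GaloisField p e) :=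
      (Finset.Icc 1 r1 ×ˢ Finset.Icc 1 r2).image fun st => ξ1 ^ st.1 * ξ2 ^ st.2
    (∏ b ∈ A, (0 - b)⁻¹) =
        (-1 : GaloisField p e) ^ n * (ξ1 ^ (r1 * (r1 + 1) * r2 / 2))⁻¹ *
          (ξ2 ^ (r2 * (r2 + 1) * r1 / 2))⁻¹ ∧
      (∏ b ∈ A, (0 - b)⁻¹) ≠ 0 ∧
      (∏ b ∈ A, (0 - b)⁻¹) ^ p ^ l = ∏ b ∈ A, (0 - b)⁻¹ := by
  intro ξ1 ξ2 r2 n A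
  have hN : p ^ e - 1 ≠ 0 :=
    Nat.sub_ne_zero_of_lt (Nat.one_lt_pow he.ne' (Fact.out : p.Prime).one_lt)
  have hαfin : IsOfFinOrder α := orderOf_pos_iff.mp (Nat.pos_of_ne_zero (hα ▸ hN))
  have hinj : Set.InjOn (fun st : ℕ × ℕ => ξ1 ^ st.1 * ξ2 ^ st.2) ↑(Icc 1 r1 ×ˢ Icc 1 r2) := by
    simpa using hαfin.injOn_pow_pow_mul_pow_pow (y := x2) (hα ▸ hlcm) hr1'
  have hprod : ∏ b ∈ A, (0 - b)⁻¹ = (-1) ^ n * (ξ1 ^ (r1 * (r1 + 1) * r2 / 2))⁻¹ *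
      (ξ2 ^ (r2 * (r2 + 1) * r1 / 2))⁻¹ := by
    rw [prod_image hinj]
    exact prod_Icc_product_inv_zero_sub_pow_mul_pow ξ1 ξ2 r1 r2
  have hξ1 : (ξ1 ^ r2) ^ (p ^ l - 1) = 1 := by
    have h := pow_pow_orderOf_pow_eq_one_of_gcd_dvd (a := α) (hα ▸ hgcd)
    rwa [pow_mul, pow_right_comm] at h
  refine ⟨hprod, by rw [hprod]; simp [ξ1, ξ2, hαfin.isUnit.ne_zero], ?_⟩
  rw [hprod, ← mem_eqLocusField_iterateFrobenius]
  refine mul_mem (mul_mem (pow_mem (neg_mem (one_mem _)) _) (inv_mem ?_)) (inv_mem ?_)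
  · rw [← Nat.div_mul_right_comm (Nat.even_mul_succ_self r1).two_dvd, pow_mul']
    refine pow_mem (mem_eqLocusField_iterateFrobenius.mpr ?_) _
    rw [← pow_sub_one_mul (pow_ne_zero l (Fact.out : p.Prime).ne_zero), hξ1, one_mul]
  · rw [← Nat.div_mul_right_comm (Nat.even_mul_succ_self r2).two_dvd, pow_mul]
    exact pow_mem (mem_of_sq_eq_one _ (pow_orderOf_mul_succ_div_two_sq_eq_one ξ2)) _

/-- let `q = p^e` with `l ∣ e`, `α` a primitive element of `F_q`,
`ξ₁ = α^{x₁}`, `ξ₂ = α^{x₂}`, and assume `(q-1) ∣ lcm(x₁,x₂)` and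
`gcd(x₂, q-1) ∣ x₁(p^l - 1)`.  With `r₂ = ord(ξ₂)`, `1 ≤ r₁ ≤ ord(ξ₁)`, `n = r₁ r₂` and
`𝒜 = ⋃_{s=1}^{r₁} {ξ₁^s ξ₂^t : 1 ≤ t ≤ r₂}` (a set of `n` distinct elements), we have
`∏_{a ∈ 𝒜} (0 - a)⁻¹ = (-1)^n ξ₁^{-r₁(r₁+1)r₂/2} ξ₂^{-r₂(r₂+1)r₁/2}`, and this element
lies in `F_{p^l}^*` (i.e. it is nonzero and fixed by the `p^l`-power Frobenius). -/
theorem prod_inv_neg_eq_of_union_cosets (p e l x1 x2 r1 : ℕ) [Fact p.Prime] (he : 0 < e)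
    (hle : l ∣ e) (α : GaloisField p e) (hα : orderOf α = p ^ e - 1)
    (hx1 : 0 < x1) (hx2 : 0 < x2)
    (hlcm : (p ^ e - 1) ∣ Nat.lcm x1 x2)
    (hgcd : Nat.gcd x2 (p ^ e - 1) ∣ x1 * (p ^ l - 1))
    (hr1 : 1 ≤ r1) (hr1' : r1 ≤ orderOf (α ^ x1)) :
    let ξ1 : GaloisField p e := α ^ x1
    let ξ2 : GaloisField p e := α ^ x2
    let r2 : ℕ := orderOf ξ2
    let n : ℕ := r1 * r2
    let A : Finset (GaloisField p e) :=
      (Finset.Icc 1 r1 ×ˢ Finset.Icc 1 r2).image fun st => ξ1 ^ st.1 * ξ2 ^ st.2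
    (∏ b ∈ A, (0 - b)⁻¹) =
        (-1 : GaloisField p e) ^ n * (ξ1 ^ (r1 * (r1 + 1) * r2 / 2))⁻¹ *
          (ξ2 ^ (r2 * (r2 + 1) * r1 / 2))⁻¹ ∧
      (∏ b ∈ A, (0 - b)⁻¹) ≠ 0 ∧
      (∏ b ∈ A, (0 - b)⁻¹) ^ p ^ l = ∏ b ∈ A, (0 - b)⁻¹ :=
  prod_inv_neg_eq_of_union_cosets_general p e l x1 x2 r1 he α hα hlcm hgcd hr1'
end
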